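/- arXiv:math/0104289 — 6 statements merged into one kernel-verified Lean document; each statement's English description precedes it below -/
import Mathlib

section
/- Let H₄ be the Hurwitz monodromy group of degree 4 and let 𝒬 be the subgroup of H₄ generated by (q₁q₂q₃)² and q₁q₃⁻¹. Then 𝒬 is a normal subgroup of H₄, 𝒬 is isomorphic to the quaternion group of order 8, and 𝒬 equals the normal closure in H₄ of the single element (q₁q₂q₃)², and also equals the normal closure in H₄ of the single element q₁q₃⁻¹. -/
namespace Stmt1

/-- The braid and Hurwitz relations defining the Hurwitz monodromy group `H₄`:
`q₁q₂q₁ = q₂q₁q₂`, `q₂q₃q₂ = q₃q₂q₃`, `q₁q₃ = q₃q₁` and `q₁q₂q₃q₃q₂q₁ = 1`. -/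
def H4Rels : Set (FreeGroup (Fin 3)) :=
  { FreeGroup.of 0 * FreeGroup.of 1 * FreeGroup.of 0 *
      (FreeGroup.of 1 * FreeGroup.of 0 * FreeGroup.of 1)⁻¹,
    FreeGroup.of 1 * FreeGroup.of 2 * FreeGroup.of 1 *
      (FreeGroup.of 2 * FreeGroup.of 1 * FreeGroup.of 2)⁻¹,
    FreeGroup.of 0 * FreeGroup.of 2 * (FreeGroup.of 2 * FreeGroup.of 0)⁻¹,
    FreeGroup.of 0 * FreeGroup.of 1 * FreeGroup.of 2 * FreeGroup.of 2 *
      FreeGroup.of 1 * FreeGroup.of 0 }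

/-- The Hurwitz monodromy group of degree 4. -/
abbrev H4 : Type := PresentedGroup H4Rels

/-- The generators `q₁, q₂, q₃` of `H₄` (indexed by `0, 1, 2`). -/
def q (i : Fin 3) : H4 := PresentedGroup.of i


/-- The subgroup `𝒬 = ⟨(q₁q₂q₃)², q₁q₃⁻¹⟩` of `H₄`. -/
def Q : Subgroup H4 := Subgroup.closure {(q 0 * q 1 * q 2) ^ 2, q 0 * (q 2)⁻¹}

/-! ### Infrastructure for proving identities in `H4` -/

/-- The projection from the free group. -/
def pr : FreeGroup (Fin 3) →* H4 := QuotientGroup.mk' (Subgroup.normalClosure H4Rels)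

lemma q_def (i : Fin 3) : q i = pr (FreeGroup.of i) := rfl

lemma pi_eq {w₁ w₂ : FreeGroup (Fin 3)}
    (h : w₁⁻¹ * w₂ ∈ Subgroup.normalClosure H4Rels) : pr w₁ = pr w₂ :=
  QuotientGroup.eq.mpr h

lemma pi_eq_one {w : FreeGroup (Fin 3)}
    (h : w ∈ Subgroup.normalClosure H4Rels) : pr w = 1 :=
  (QuotientGroup.eq_one_iff w).mpr h

lemma conjRel {r : FreeGroup (Fin 3)} (h : r ∈ H4Rels) (u : FreeGroup (Fin 3)) :
    u * r * u⁻¹ ∈ Subgroup.normalClosure H4Rels :=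
  (Subgroup.normalClosure_normal).conj_mem r (Subgroup.subset_normalClosure h) u

lemma conjRelInv {r : FreeGroup (Fin 3)} (h : r ∈ H4Rels) (u : FreeGroup (Fin 3)) :
    u * r⁻¹ * u⁻¹ ∈ Subgroup.normalClosure H4Rels :=
  (Subgroup.normalClosure_normal).conj_mem r⁻¹
    (inv_mem (Subgroup.subset_normalClosure h)) u

lemma mem_of_eq {x y : FreeGroup (Fin 3)} (h : y ∈ Subgroup.normalClosure H4Rels)
    (e : x = y) : x ∈ Subgroup.normalClosure H4Rels := e ▸ h

lemma hr1 : FreeGroup.of 0 * FreeGroup.of 1 * FreeGroup.of 0 *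
    (FreeGroup.of 1 * FreeGroup.of 0 * FreeGroup.of 1)⁻¹ ∈ H4Rels :=
  Set.mem_insert _ _

lemma hr2 : FreeGroup.of 1 * FreeGroup.of 2 * FreeGroup.of 1 *
    (FreeGroup.of 2 * FreeGroup.of 1 * FreeGroup.of 2)⁻¹ ∈ H4Rels :=
  Set.mem_insert_of_mem _ (Set.mem_insert _ _)

lemma hr3 : FreeGroup.of 0 * FreeGroup.of 2 * (FreeGroup.of 2 * FreeGroup.of 0)⁻¹ ∈ H4Rels :=
  Set.mem_insert_of_mem _ (Set.mem_insert_of_mem _ (Set.mem_insert _ _))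

lemma hr4 : FreeGroup.of 0 * FreeGroup.of 1 * FreeGroup.of 2 * FreeGroup.of 2 *
    FreeGroup.of 1 * FreeGroup.of 0 ∈ H4Rels :=
  Set.mem_insert_of_mem _ (Set.mem_insert_of_mem _ (Set.mem_insert_of_mem _ rfl))

/-! ### The key identities in `H4` -/
lemma E1 : q 0 * (q 0 * q 1 * q 2) ^ 2 * (q 0)⁻¹ = ((q 0 * q 1 * q 2) ^ 2)⁻¹ * (q 0 * (q 2)⁻¹) := by
  simp only [q_def, ← map_mul, ← map_inv, ← map_pow]
  exact pi_eq (mem_of_eq (mul_mem (mul_mem (mul_mem (mul_mem (mul_mem (conjRelInv hr4 (FreeGroup.of 0 * (FreeGroup.of 2)⁻¹ * (FreeGroup.of 1)⁻¹ * (FreeGroup.of 0)⁻¹ * (FreeGroup.of 2)⁻¹ * (FreeGroup.of 1)⁻¹ * (FreeGroup.of 0)⁻¹)) (conjRel hr2 (FreeGroup.of 0 * (FreeGroup.of 2)⁻¹ * (FreeGroup.of 1)⁻¹ * (FreeGroup.of 0)⁻¹ * FreeGroup.of 2 * FreeGroup.of 1 * (FreeGroup.of 2)⁻¹ * (FreeGroup.of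 1)⁻¹ * (FreeGroup.of 2)⁻¹))) (conjRel hr3 (FreeGroup.of 0 * (FreeGroup.of 2)⁻¹ * (FreeGroup.of 1)⁻¹ * (FreeGroup.of 0)⁻¹ * (FreeGroup.of 1)⁻¹ * FreeGroup.of 2 * (FreeGroup.of 0)⁻¹ * (FreeGroup.of 2)⁻¹))) (conjRelInv hr3 (FreeGroup.of 0 * (FreeGroup.of 2)⁻¹ * (FreeGroup.of 0)⁻¹))) (conjRel hr1 ((FreeGroup.of 2)⁻¹ * FreeGroup.of 0 * (FreeGroup.of 1)⁻¹ * (FreeGroup.of 0)⁻¹ * (FreeGroup.of 1)⁻¹))) (conjRelInv hr4 ((FreeGroup.of 2)⁻¹ * (FreeGroup.of 1)⁻¹ * (FreeGroup.of 0)⁻¹))) (by decide))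

lemma E2 : q 0 * (q 0 * (q 2)⁻¹) * (q 0)⁻¹ = q 0 * (q 2)⁻¹ := by
  simp only [q_def, ← map_mul, ← map_inv, ← map_pow]
  exact pi_eq (mem_of_eq (conjRel hr3 ((1 : FreeGroup (Fin 3)))) (by decide))

lemma E3 : q 1 * (q 0 * q 1 * q 2) ^ 2 * (q 1)⁻¹ = q 0 * (q 2)⁻¹ := by
  simp only [q_def, ← map_mul, ← map_inv, ← map_pow]
  exact pi_eq (mem_of_eq (mul_mem (mul_mem (mul_mem (conjRel hr1 (FreeGroup.of 1 * (FreeGroup.of 2)⁻¹ * (FreeGroup.of 1)⁻¹ * (FreeGroup.of 0)⁻¹ * (FreeGroup.of 2)⁻¹ * (FreeGroup.of 1)⁻¹ * (FreeGroup.of 0)⁻¹ * (FreeGroup.of 1)⁻¹)) (conjRel hr2 (FreeGroup.of 1 * (FreeGroup.of 2)⁻¹ * (FreeGroup.of 1)⁻¹ * (FreeGroup.of 2)⁻¹))) (conjRel hr3 ((FreeGroup.of 2)⁻¹ * (FreeGroup.of 1)⁻¹ * FreeGroup.of 2 * (FreeGroup.of 0)⁻¹ * (FreeGroup.of 2)⁻¹)))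 (conjRelInv hr4 ((FreeGroup.of 2)⁻¹ * (FreeGroup.of 1)⁻¹ * (FreeGroup.of 0)⁻¹))) (by decide))

lemma E4 : q 1 * (q 0 * (q 2)⁻¹) * (q 1)⁻¹ = ((q 0 * q 1 * q 2) ^ 2)⁻¹ := by
  simp only [q_def, ← map_mul, ← map_inv, ← map_pow]
  exact pi_eq (mem_of_eq (mul_mem (mul_mem (mul_mem (mul_mem (conjRel hr3 (FreeGroup.of 1 * FreeGroup.of 2 * (FreeGroup.of 0)⁻¹ * (FreeGroup.of 2)⁻¹)) (conjRelInv hr2 (FreeGroup.of 1 * (FreeGroup.of 0)⁻¹ * FreeGroup.of 2 * (FreeGroup.of 1)⁻¹ * (FreeGroup.of 2)⁻¹ * (FreeGroup.of 1)⁻¹))) (conjRelInv hr1 (FreeGroup.of 1 * (FreeGroup.of 0)⁻¹ * (FreeGroup.of 1)⁻¹ * (FreeGroup.of 0)⁻¹))) (conjRelInv hr3 ((FreeGroup.of 0)⁻¹ * (FreeGroup.of 1)⁻¹ * FreeGroup.of 0 * (FreeGroup.of 2)⁻¹ * (FreeGroup.of 0)⁻¹))) (conjRelInv hr4 ((1 :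 FreeGroup (Fin 3))))) (by decide))

lemma E5 : q 2 * (q 0 * q 1 * q 2) ^ 2 * (q 2)⁻¹ = (q 0 * q 1 * q 2) ^ 2 * (q 0 * (q 2)⁻¹) := by
  simp only [q_def, ← map_mul, ← map_inv, ← map_pow]
  exact pi_eq (mem_of_eq (mul_mem (mul_mem (mul_mem (conjRel hr3 ((FreeGroup.of 1)⁻¹ * (FreeGroup.of 0)⁻¹ * (FreeGroup.of 2)⁻¹ * (FreeGroup.of 1)⁻¹ * (FreeGroup.of 0)⁻¹ * (FreeGroup.of 2)⁻¹)) (conjRel hr2 ((FreeGroup.of 1)⁻¹ * (FreeGroup.of 0)⁻¹ * (FreeGroup.of 2)⁻¹ * (FreeGroup.of 1)⁻¹ * (FreeGroup.of 2)⁻¹))) (conjRel hr1 ((FreeGroup.of 1)⁻¹ * (FreeGroup.of 0)⁻¹ * (FreeGroup.of 1)⁻¹))) (conjRelInv hr3 ((FreeGroup.of 0)⁻¹))) (by decide))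

lemma E6 : q 2 * (q 0 * (q 2)⁻¹) * (q 2)⁻¹ = q 0 * (q 2)⁻¹ := by
  simp only [q_def, ← map_mul, ← map_inv, ← map_pow]
  exact pi_eq (mem_of_eq (conjRel hr3 (FreeGroup.of 2 * FreeGroup.of 2 * (FreeGroup.of 0)⁻¹ * (FreeGroup.of 2)⁻¹)) (by decide))

lemma E7 : ((q 0 * q 1 * q 2) ^ 2) ^ 4 = 1 := by
  simp only [q_def, ← map_mul, ← map_inv, ← map_pow]
  exact pi_eq_one (mem_of_eq (mul_mem (mul_mem (mul_mem (mul_mem (mul_mem (mul_mem (mul_mem (mul_mem (mul_mem (mul_mem (mul_mem (mul_mem (mul_mem (mul_mem (mul_mem (mul_mem (mul_mem (mul_mem (mul_mem (conjRel hr4 ((1 : FreeGroup (Fin 3)))) (conjRel hr3 ((FreeGroup.of 0)⁻¹ * (FreeGroup.of 1)⁻¹ * (FreeGroup.of 2)⁻¹))) (conjRel hr1 ((FreeGroup.of 0)⁻¹ * (FreeGroup.of 1)⁻¹))) (conjRel hr2 (FreeGroup.of 1 * (FreeGroup.of 0)⁻¹ * (FreeGroup.of 1)⁻¹ * (FreeGroup.of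 2)⁻¹))) (conjRelInv hr3 (FreeGroup.of 1 * (FreeGroup.of 0)⁻¹))) (conjRel hr1 (FreeGroup.of 1 * FreeGroup.of 2 * (FreeGroup.of 0)⁻¹ * (FreeGroup.of 1)⁻¹))) (conjRelInv hr3 (FreeGroup.of 1 * FreeGroup.of 2 * FreeGroup.of 1 * (FreeGroup.of 0)⁻¹))) (conjRel hr2 ((1 : FreeGroup (Fin 3))))) (conjRel hr4 (FreeGroup.of 2 * FreeGroup.of 1 * FreeGroup.of 2 * FreeGroup.of 2 * FreeGroup.of 1 * FreeGroup.of 0))) (conjRelInv hr3 (FreeGroup.of 2 * (FreeGroup.of 0)⁻¹ * (FreeGroup.of 0)⁻¹))) (conjRel hr3 (FreeGroup.of 2 * (FreeGroup.of 0)⁻¹ * (FreeGroup.of 2)⁻¹))) (conjRel hr4 ((FreeGroup.of 0)⁻¹ * FreeGroup.of 2 * FreeGroup.of 2 * FreeGroup.of 1 * FreeGroup.of 0))) (conjRelInv hr3 ((FreeGroup.of 0)⁻¹ * (FreeGroup.of 1)⁻¹ * (FreeGroup.of 0)⁻¹ * (FreeGroup.of 0)⁻¹))) (conjRelInv hr1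 ((FreeGroup.of 0)⁻¹ * (FreeGroup.of 1)⁻¹ * (FreeGroup.of 0)⁻¹))) (conjRelInv hr2 ((FreeGroup.of 1)⁻¹ * (FreeGroup.of 0)⁻¹ * (FreeGroup.of 1)⁻¹))) (conjRelInv hr3 ((FreeGroup.of 1)⁻¹ * (FreeGroup.of 0)⁻¹))) (conjRelInv hr1 ((FreeGroup.of 1)⁻¹ * FreeGroup.of 2 * (FreeGroup.of 0)⁻¹))) (conjRelInv hr2 ((FreeGroup.of 1)⁻¹))) (conjRel hr3 (FreeGroup.of 2 * FreeGroup.of 1 * (FreeGroup.of 2)⁻¹))) (conjRel hr4 (FreeGroup.of 2 * FreeGroup.of 1 * FreeGroup.of 0))) (by decide))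

lemma E8 : (q 0 * (q 2)⁻¹) * (q 0 * (q 2)⁻¹) = (q 0 * q 1 * q 2) ^ 2 * (q 0 * q 1 * q 2) ^ 2 := by
  simp only [q_def, ← map_mul, ← map_inv, ← map_pow]
  exact pi_eq (mem_of_eq (mul_mem (mul_mem (mul_mem (mul_mem (mul_mem (mul_mem (mul_mem (mul_mem (mul_mem (conjRel hr3 (FreeGroup.of 2 * (FreeGroup.of 0)⁻¹ * (FreeGroup.of 2)⁻¹)) (conjRel hr4 ((FreeGroup.of 0)⁻¹ * FreeGroup.of 2 * FreeGroup.of 2 * FreeGroup.of 1 * FreeGroup.of 0))) (conjRelInv hr3 ((FreeGroup.of 0)⁻¹ * (FreeGroup.of 1)⁻¹ * (FreeGroup.of 0)⁻¹ * (FreeGroup.of 0)⁻¹))) (conjRelInv hr1 ((FreeGroup.of 0)⁻¹ * (FreeGroup.of 1)⁻¹ * (FreeGroup.of 0)⁻¹))) (conjRelInv hr2 ((FreeGroup.of 1)⁻¹ * (FreeGroup.of 0)⁻¹ * (FreeGroup.of 1)⁻¹))) (conjRelInv hr3 ((FreeGroup.of 1)⁻¹ * (FreeGroup.of 0)⁻¹)))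 (conjRelInv hr1 ((FreeGroup.of 1)⁻¹ * FreeGroup.of 2 * (FreeGroup.of 0)⁻¹))) (conjRelInv hr2 ((FreeGroup.of 1)⁻¹))) (conjRel hr3 (FreeGroup.of 2 * FreeGroup.of 1 * (FreeGroup.of 2)⁻¹))) (conjRel hr4 (FreeGroup.of 2 * FreeGroup.of 1 * FreeGroup.of 0))) (by decide))

lemma E9 : (q 0 * (q 2)⁻¹) * (q 0 * q 1 * q 2) ^ 2 * (q 0 * (q 2)⁻¹)⁻¹ = ((q 0 * q 1 * q 2) ^ 2)⁻¹ := by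
  simp only [q_def, ← map_mul, ← map_inv, ← map_pow]
  exact pi_eq (mem_of_eq (mul_mem (mul_mem (mul_mem (conjRelInv hr4 (FreeGroup.of 0 * (FreeGroup.of 2)⁻¹ * (FreeGroup.of 2)⁻¹ * (FreeGroup.of 1)⁻¹ * (FreeGroup.of 0)⁻¹)) (conjRel hr3 (FreeGroup.of 0 * FreeGroup.of 1 * FreeGroup.of 0 * (FreeGroup.of 2)⁻¹ * (FreeGroup.of 1)⁻¹ * (FreeGroup.of 0)⁻¹ * FreeGroup.of 2 * (FreeGroup.of 0)⁻¹ * (FreeGroup.of 2)⁻¹))) (conjRelInv hr4 (FreeGroup.of 0 * FreeGroup.of 1 * FreeGroup.of 0 * (FreeGroup.of 2)⁻¹ * (FreeGroup.of 1)⁻¹ * (FreeGroup.of 0)⁻¹))) (conjRel hr3 (FreeGroup.of 0 * FreeGroup.of 1))) (by decide))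

lemma E11 : (q 0 * q 1 * q 2) ^ 2 = (q 0 * q 1) * (q 0 * (q 2)⁻¹)⁻¹ * (q 0 * q 1)⁻¹ * (q 0 * (q 2)⁻¹) := by
  simp only [q_def, ← map_mul, ← map_inv, ← map_pow]
  exact pi_eq (mem_of_eq (conjRelInv hr4 ((FreeGroup.of 2)⁻¹ * (FreeGroup.of 1)⁻¹ * (FreeGroup.of 0)⁻¹)) (by decide))

/-! ### Abbreviations -/

private def Av : H4 := (q 0 * q 1 * q 2) ^ 2
private def Bv : H4 := q 0 * (q 2)⁻¹

lemma Q_eq : Q = Subgroup.closure ({Av, Bv} : Set H4) := rfl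

lemma hAQ : Av ∈ Q := Subgroup.subset_closure (Set.mem_insert _ _)
lemma hBQ : Bv ∈ Q := Subgroup.subset_closure (Set.mem_insert_of_mem _ rfl)

lemma E1' : q 0 * Av * (q 0)⁻¹ = Av⁻¹ * Bv := E1
lemma E2' : q 0 * Bv * (q 0)⁻¹ = Bv := E2
lemma E3' : q 1 * Av * (q 1)⁻¹ = Bv := E3
lemma E4' : q 1 * Bv * (q 1)⁻¹ = Av⁻¹ := E4
lemma E5' : q 2 * Av * (q 2)⁻¹ = Av * Bv := E5
lemma E6' : q 2 * Bv * (q 2)⁻¹ = Bv := E6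
lemma E7' : Av ^ (4 : ℕ) = 1 := E7
lemma E8' : Bv * Bv = Av * Av := E8
lemma E9' : Bv * Av * Bv⁻¹ = Av⁻¹ := E9
lemma E11' : Av = (q 0 * q 1) * Bv⁻¹ * (q 0 * q 1)⁻¹ * Bv := E11

lemma mem_of_eq' {G : Type*} [Group G] {S : Subgroup G} {a b : G}
    (h : b ∈ S) (e : a = b) : a ∈ S := e ▸ h

/-! ### Conjugation stability of `Q` -/

lemma conj_gen (g x y : H4)
    (hx : g * Av * g⁻¹ = x) (hy : g * Bv * g⁻¹ = y)
    (hxQ : x ∈ Q) (hyQ : y ∈ Q)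
    (hA : Av ∈ Subgroup.closure ({x, y} : Set H4))
    (hB : Bv ∈ Subgroup.closure ({x, y} : Set H4)) :
    Subgroup.map (MulAut.conj g).toMonoidHom Q = Q := by
  have himg : ((MulAut.conj g).toMonoidHom : H4 → H4) '' ({Av, Bv} : Set H4) = {x, y} := by
    rw [Set.image_pair]
    simp only [MulEquiv.coe_toMonoidHom, MulAut.conj_apply]
    rw [hx, hy]
  have h2 : Subgroup.closure ({x, y} : Set H4) = Q := by
    apply le_antisymm
    · rw [Subgroup.closure_le]
      rintro t (rfl | rfl)
      · exact hxQ
      · exact hyQ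
    · rw [Q_eq, Subgroup.closure_le]
      rintro t (rfl | rfl)
      · exact hA
      · exact hB
  calc Subgroup.map (MulAut.conj g).toMonoidHom Q
      = Subgroup.closure (((MulAut.conj g).toMonoidHom : H4 → H4) '' ({Av, Bv} : Set H4)) := by
        rw [Q_eq, MonoidHom.map_closure]
    _ = Subgroup.closure ({x, y} : Set H4) := by rw [himg]
    _ = Q := h2

lemma map_conj_Q : ∀ i : Fin 3, Subgroup.map (MulAut.conj (q i)).toMonoidHom Q = Q := by
  intro i
  fin_cases i
  · refine conj_gen (q 0) (Av⁻¹ * Bv) Bv E1' E2' (mul_mem (inv_mem hAQ) hBQ) hBQ ?_ ?_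
    · exact mem_of_eq' (mul_mem (Subgroup.subset_closure (Set.mem_insert_of_mem _ rfl))
        (inv_mem (Subgroup.subset_closure (Set.mem_insert _ _)))) (by group)
    · exact Subgroup.subset_closure (Set.mem_insert_of_mem _ rfl)
  · refine conj_gen (q 1) Bv Av⁻¹ E3' E4' hBQ (inv_mem hAQ) ?_ ?_
    · exact mem_of_eq' (inv_mem (Subgroup.subset_closure (Set.mem_insert_of_mem _ rfl)))
        (by group)
    · exact Subgroup.subset_closure (Set.mem_insert _ _)
  · refine conj_gen (q 2) (Av * Bv) Bv E5' E6' (mul_mem hAQ hBQ) hBQ ?_ ?_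
    · exact mem_of_eq' (mul_mem (Subgroup.subset_closure (Set.mem_insert _ _))
        (inv_mem (Subgroup.subset_closure (Set.mem_insert_of_mem _ rfl)))) (by group)
    · exact Subgroup.subset_closure (Set.mem_insert_of_mem _ rfl)

lemma hQN : Q.Normal := by
  rw [← Subgroup.normalizer_eq_top_iff, eq_top_iff]
  intro g _
  refine PresentedGroup.generated_by _ _ (fun j => ?_) g
  rw [Subgroup.mem_normalizer_iff]
  intro h
  constructor
  · intro hh
    have h1 : (MulAut.conj (PresentedGroup.of j : H4)).toMonoidHom h ∈
        Subgroup.map (MulAut.conj (q j)).toMonoidHom Q :=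
      Subgroup.mem_map_of_mem _ hh
    rw [map_conj_Q j] at h1
    simpa [q, MulAut.conj_apply] using h1
  · intro hh
    rw [← map_conj_Q j] at hh
    have h1 := Subgroup.mem_map_equiv.mp hh
    simpa [q, MulAut.conj_symm_apply, mul_assoc] using h1

/-! ### Normal closure descriptions -/

lemma hNC1 : Q = Subgroup.normalClosure {Av} := by
  haveI := hQN
  apply le_antisymm
  · rw [Q_eq, Subgroup.closure_le]
    rintro t (rfl | rfl)
    · exact Subgroup.subset_normalClosure rfl
    · refine mem_of_eq' (mul_mem (Subgroup.subset_normalClosure (Set.mem_singleton _))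
        ((Subgroup.normalClosure_normal).conj_mem Av (Subgroup.subset_normalClosure (Set.mem_singleton _))
          (q 0))) ?_
      rw [E1']; group
  · refine Subgroup.normalClosure_le_normal ?_
    rintro t rfl
    exact hAQ

lemma hNC2 : Q = Subgroup.normalClosure {Bv} := by
  haveI := hQN
  apply le_antisymm
  · rw [Q_eq, Subgroup.closure_le]
    rintro t (rfl | rfl)
    · refine mem_of_eq' (mul_mem ((Subgroup.normalClosure_normal).conj_mem Bv⁻¹
        (inv_mem (Subgroup.subset_normalClosure (Set.mem_singleton _))) (q 0 * q 1))
        (Subgroup.subset_normalClosure (Set.mem_singleton _))) ?_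
      exact E11'
    · exact Subgroup.subset_normalClosure rfl
  · refine Subgroup.normalClosure_le_normal ?_
    rintro t rfl
    exact hBQ

/-! ### The finite permutation quotient -/

private def pf1 : Fin 16 → Fin 16 := ![10, 0, 13, 6, 12, 4, 2, 15, 1, 7, 8, 9, 14, 3, 5, 11]
private def pg1 : Fin 16 → Fin 16 := ![1, 8, 6, 13, 5, 14, 3, 9, 10, 11, 0, 15, 4, 2, 12, 7]
private def pf2 : Fin 16 → Fin 16 := ![10, 12, 9, 14, 7, 4, 5, 6, 13, 0, 2, 1, 15, 3, 8, 11]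
private def pg2 : Fin 16 → Fin 16 := ![9, 11, 10, 13, 5, 6, 7, 4, 14, 2, 0, 15, 1, 8, 3, 12]
private def pf3 : Fin 16 → Fin 16 := ![6, 3, 14, 4, 7, 9, 12, 1, 13, 8, 2, 10, 15, 5, 11, 0]
private def pg3 : Fin 16 → Fin 16 := ![15, 7, 10, 1, 3, 13, 0, 4, 9, 5, 11, 14, 6, 8, 2, 12]

private def p1 : Equiv.Perm (Fin 16) :=
  ⟨pf1, pg1, by intro x; revert x; decide, by intro x; revert x; decide⟩
private def p2 : Equiv.Perm (Fin 16) :=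
  ⟨pf2, pg2, by intro x; revert x; decide, by intro x; revert x; decide⟩
private def p3 : Equiv.Perm (Fin 16) :=
  ⟨pf3, pg3, by intro x; revert x; decide, by intro x; revert x; decide⟩

private def f3 : Fin 3 → Equiv.Perm (Fin 16) := ![p1, p2, p3]

private lemma hrelsG : ∀ r ∈ H4Rels, FreeGroup.lift f3 r = 1 := by
  intro r hr
  simp only [H4Rels, Set.mem_insert_iff, Set.mem_singleton_iff] at hr
  rcases hr with rfl | rfl | rfl | rfl <;>
    simp only [map_mul, map_inv, FreeGroup.lift_apply_of] <;> decide

private def φ : H4 →* Equiv.Perm (Fin 16) := PresentedGroup.toGroup hrelsG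

private lemma hA2ne : Av * Av ≠ 1 := by
  intro hcon
  have h2 := congrArg φ hcon
  rw [map_mul, map_one] at h2
  have hq : ∀ i : Fin 3, φ (q i) = f3 i := fun i => PresentedGroup.toGroup.of hrelsG
  have hQA : φ Av = (f3 0 * f3 1 * f3 2) ^ 2 := by
    show φ ((q 0 * q 1 * q 2) ^ 2) = _
    rw [map_pow, map_mul, map_mul, hq 0, hq 1, hq 2]
  rw [hQA] at h2
  exact absurd h2 (by decide)

/-! ### The homomorphism from the quaternion group -/

private lemma hA4 : Av ^ (4 : ℤ) = 1 := by
  rw [show (4 : ℤ) = ((4 : ℕ) : ℤ) by norm_num, zpow_natCast]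
  exact E7'

private lemma zpA {m k : ℤ} (h : (m : ZMod (2 * 2)) = (k : ZMod (2 * 2))) :
    Av ^ m = Av ^ k := by
  have hd : ((2 * 2 : ℕ) : ℤ) ∣ k - m := ((ZMod.intCast_eq_intCast_iff _ _ _).mp h).dvd
  obtain ⟨t, ht⟩ := hd
  have hk : k = m + 4 * t := by push_cast at ht; linarith
  rw [hk, zpow_add, zpow_mul, hA4, one_zpow, mul_one]

private lemma hvn (i : ZMod (2 * 2)) : ((i.val : ℕ) : ZMod (2 * 2)) = i := by
  haveI : NeZero (2 * 2) := ⟨by norm_num⟩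
  exact ZMod.natCast_rightInverse i

private lemma hABm (m : ℤ) : Av ^ m * Bv = Bv * Av ^ (-m) := by
  have key : Bv * Av ^ (-m) * Bv⁻¹ = Av ^ m := by
    calc Bv * Av ^ (-m) * Bv⁻¹ = (Bv * Av * Bv⁻¹) ^ (-m) := conj_zpow.symm
    _ = (Av⁻¹) ^ (-m) := by rw [E9']
    _ = Av ^ m := by group
  calc Av ^ m * Bv = (Bv * Av ^ (-m) * Bv⁻¹) * Bv := by rw [key]
  _ = Bv * Av ^ (-m) := by group

private lemma hBB : Bv * Bv = Av ^ (2 : ℤ) := by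
  rw [E8', ← zpow_two]

private def psiFun : QuaternionGroup 2 → H4
  | QuaternionGroup.a i => Av ^ ((i.val : ℕ) : ℤ)
  | QuaternionGroup.xa i => Bv * Av ^ ((i.val : ℕ) : ℤ)

private lemma psi_mul : ∀ x y : QuaternionGroup 2, psiFun (x * y) = psiFun x * psiFun y := by
  rintro (i | i) (j | j)
  · rw [QuaternionGroup.a_mul_a]
    show Av ^ (((i + j).val : ℕ) : ℤ) = Av ^ ((i.val : ℕ) : ℤ) * Av ^ ((j.val : ℕ) : ℤ)
    rw [← zpow_add]
    apply zpA
    push_cast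
    rw [hvn, hvn, hvn]
  · rw [QuaternionGroup.a_mul_xa]
    show Bv * Av ^ (((j - i).val : ℕ) : ℤ) =
      Av ^ ((i.val : ℕ) : ℤ) * (Bv * Av ^ ((j.val : ℕ) : ℤ))
    rw [← mul_assoc, hABm, mul_assoc, ← zpow_add]
    congr 1
    apply zpA
    push_cast
    rw [hvn, hvn, hvn]
    ring
  · rw [QuaternionGroup.xa_mul_a]
    show Bv * Av ^ (((i + j).val : ℕ) : ℤ) =
      (Bv * Av ^ ((i.val : ℕ) : ℤ)) * Av ^ ((j.val : ℕ) : ℤ)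
    rw [mul_assoc, ← zpow_add]
    congr 1
    apply zpA
    push_cast
    rw [hvn, hvn, hvn]
  · rw [QuaternionGroup.xa_mul_xa]
    show Av ^ (((((2 : ℕ) : ZMod (2 * 2)) + j - i).val : ℕ) : ℤ) =
      (Bv * Av ^ ((i.val : ℕ) : ℤ)) * (Bv * Av ^ ((j.val : ℕ) : ℤ))
    rw [show (Bv * Av ^ ((i.val : ℕ) : ℤ)) * (Bv * Av ^ ((j.val : ℕ) : ℤ)) =
      Bv * (Av ^ ((i.val : ℕ) : ℤ) * Bv) * Av ^ ((j.val : ℕ) : ℤ) by group, hABm,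
      show Bv * (Bv * Av ^ (-((i.val : ℕ) : ℤ))) * Av ^ ((j.val : ℕ) : ℤ) =
        (Bv * Bv) * (Av ^ (-((i.val : ℕ) : ℤ)) * Av ^ ((j.val : ℕ) : ℤ)) by group,
      hBB, ← zpow_add, ← zpow_add]
    apply zpA
    push_cast
    rw [hvn, hvn, hvn]
    ring

private def ψ : QuaternionGroup 2 →* H4 := MonoidHom.mk' psiFun psi_mul

private lemma psi_a1 : ψ (QuaternionGroup.a 1) = Av := by
  show Av ^ ((((1 : ZMod (2 * 2)).val : ℕ)) : ℤ) = Av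
  rw [show ((((1 : ZMod (2 * 2)).val : ℕ)) : ℤ) = 1 by decide, zpow_one]

private lemma psi_xa0 : ψ (QuaternionGroup.xa 0) = Bv := by
  show Bv * Av ^ ((((0 : ZMod (2 * 2)).val : ℕ)) : ℤ) = Bv
  rw [show ((((0 : ZMod (2 * 2)).val : ℕ)) : ℤ) = 0 by decide, zpow_zero, mul_one]

private lemma psi_z : ψ (QuaternionGroup.a 2) = Av * Av := by
  show Av ^ ((((2 : ZMod (2 * 2)).val : ℕ)) : ℤ) = Av * Av
  rw [show ((((2 : ZMod (2 * 2)).val : ℕ)) : ℤ) = 2 by decide, zpow_two]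

private lemma psi_inj : Function.Injective ψ := by
  refine (injective_iff_map_eq_one ψ).mpr ?_
  intro g hg
  by_contra hne
  have tri : ∀ g : QuaternionGroup 2,
      g = 1 ∨ g = QuaternionGroup.a 2 ∨ g * g = QuaternionGroup.a 2 := by decide
  have hz : ψ (QuaternionGroup.a 2) = 1 := by
    rcases tri g with h1 | h2 | h3
    · exact absurd h1 hne
    · rw [← h2]; exact hg
    · rw [← h3, map_mul, hg, one_mul]
  rw [psi_z] at hz
  exact hA2ne hz

private lemma psi_range : ψ.range = Q := by
  have ha : ∀ i : ZMod (2 * 2), QuaternionGroup.a i ∈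
      Subgroup.closure ({QuaternionGroup.a 1, QuaternionGroup.xa 0} : Set (QuaternionGroup 2)) := by
    intro i
    refine mem_of_eq' (pow_mem (Subgroup.subset_closure (Set.mem_insert _ _)) (i.val : ℕ)) ?_
    rw [QuaternionGroup.a_one_pow, hvn]
  have htopeq : (⊤ : Subgroup (QuaternionGroup 2)) =
      Subgroup.closure ({QuaternionGroup.a 1, QuaternionGroup.xa 0} : Set (QuaternionGroup 2)) := by
    refine le_antisymm ?_ le_top
    intro g _
    rcases g with i | i
    · exact ha i
    · refine mem_of_eq' (mul_mem (Subgroup.subset_closure (Set.mem_insert_of_mem _ rfl))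
        (ha i)) ?_
      rw [QuaternionGroup.xa_mul_a, zero_add]
  rw [MonoidHom.range_eq_map, htopeq, MonoidHom.map_closure, Set.image_pair, psi_a1, psi_xa0,
    Q_eq]

/-- `𝒬` is normal in `H₄`, isomorphic to the quaternion group of order 8, and equals the
normal closure of `(q₁q₂q₃)²` as well as the normal closure of `q₁q₃⁻¹`. -/
theorem Q_normal_quaternion :
    Q.Normal ∧ Nonempty (Q ≃* QuaternionGroup 2) ∧
      Q = Subgroup.normalClosure {(q 0 * q 1 * q 2) ^ 2} ∧
      Q = Subgroup.normalClosure {q 0 * (q 2)⁻¹} := by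
  refine ⟨hQN, ⟨?_⟩, hNC1, hNC2⟩
  exact (MulEquiv.subgroupCongr psi_range.symm).trans (MonoidHom.ofInjective psi_inj).symm

end Stmt1
end

section
/- The Hurwitz monodromy group H₃, i.e., the presented group on generators q₁, q₂ with relations q₁q₂q₁ = q₂q₁q₂ and q₁q₂q₂q₁ = 1, is isomorphic to the dicyclic (generalized quaternion) group of order 12. Equivalently, setting τ₁ = q₁q₂ and τ₂ = q₁q₂q₁, one has ord(τ₁) = 6, ord(τ₂) = 4, τ₂⁻¹τ₁τ₂ = τ₁⁻¹ and τ₂² = τ₁³. -/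
namespace Stmt4

/-- The relations defining the Hurwitz monodromy group `H₃`:
the braid relation `q₁q₂q₁ = q₂q₁q₂` and the Hurwitz relation `q₁q₂q₂q₁ = 1`. -/
def H3Rels : Set (FreeGroup (Fin 2)) :=
  { FreeGroup.of 0 * FreeGroup.of 1 * FreeGroup.of 0 *
      (FreeGroup.of 1 * FreeGroup.of 0 * FreeGroup.of 1)⁻¹,
    FreeGroup.of 0 * FreeGroup.of 1 * FreeGroup.of 1 * FreeGroup.of 0 }

/-- The Hurwitz monodromy group of degree 3. -/
abbrev H3 : Type := PresentedGroup H3Rels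

/-- The generators `q₁, q₂` of `H₃` (indexed by `0, 1`). -/
def q (i : Fin 2) : H3 := PresentedGroup.of i

/-- `τ₁ = q₁q₂`. -/
def τ₁ : H3 := q 0 * q 1

/-- `τ₂ = q₁q₂q₁`. -/
def τ₂ : H3 := q 0 * q 1 * q 0

lemma rel_one {r : FreeGroup (Fin 2)} (h : r ∈ H3Rels) :
    PresentedGroup.mk H3Rels r = 1 :=
  (QuotientGroup.eq_one_iff r).mpr (Subgroup.subset_normalClosure h)

lemma braid : q 0 * q 1 * q 0 = q 1 * q 0 * q 1 := by
  have h := rel_one (Set.mem_insert _ _)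
  rw [map_mul, map_mul, map_inv, map_mul, map_mul, mul_inv_eq_one] at h
  exact h

lemma hurwitz : q 0 * q 1 * q 1 * q 0 = 1 := by
  have h := rel_one (show _ ∈ H3Rels from Set.mem_insert_iff.mpr (Or.inr rfl))
  rw [map_mul, map_mul, map_mul] at h
  exact h

lemma tau2_alt : τ₂ = q 1 * q 0 * q 1 := braid

lemma tau1_inv : τ₁⁻¹ = q 1 * q 0 := by
  apply inv_eq_of_mul_eq_one_right
  have := hurwitz
  unfold τ₁
  group at this ⊢
  exact this

lemma conj_rel : τ₂⁻¹ * τ₁ * τ₂ = τ₁⁻¹ := by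
  rw [tau1_inv]
  unfold τ₂ τ₁
  group

lemma sq_rel : τ₂ ^ 2 = τ₁ ^ 3 := by
  have h3 : τ₁ ^ 3 = q 0 * q 1 * (q 0 * q 1) * (q 0 * q 1) := by
    rw [τ₁, pow_succ, pow_succ, pow_one]
  rw [pow_two, h3]
  nth_rewrite 2 [tau2_alt]
  rw [τ₂]
  group

lemma conj_pow_rel (k : ℕ) : τ₂⁻¹ * τ₁ ^ k * τ₂ = τ₁⁻¹ ^ k := by
  induction k with
  | zero => simp
  | succ n ih =>
    calc τ₂⁻¹ * τ₁ ^ (n + 1) * τ₂ = (τ₂⁻¹ * τ₁ ^ n * τ₂) * (τ₂⁻¹ * τ₁ * τ₂) := by group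
    _ = τ₁⁻¹ ^ n * τ₁⁻¹ := by rw [ih, conj_rel]
    _ = τ₁⁻¹ ^ (n + 1) := by rw [pow_succ]

lemma six : τ₁ ^ 6 = 1 := by
  have h1 := conj_pow_rel 3
  rw [← sq_rel] at h1
  have h2 : τ₂ ^ 2 = (τ₂ ^ 2)⁻¹ := by
    calc τ₂ ^ 2 = τ₂⁻¹ * τ₂ ^ 2 * τ₂ := by group
    _ = (τ₂ ^ 2)⁻¹ := by rw [h1, inv_pow, sq_rel]
  have h3 : τ₁ ^ 3 = (τ₁ ^ 3)⁻¹ := by rw [← sq_rel]; exact h2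
  calc τ₁ ^ 6 = τ₁ ^ 3 * τ₁ ^ 3 := by group
  _ = (τ₁ ^ 3)⁻¹ * τ₁ ^ 3 := by rw [← h3]
  _ = 1 := inv_mul_cancel _

lemma four : τ₂ ^ 4 = 1 := by
  have : τ₂ ^ 4 = (τ₂ ^ 2) ^ 2 := by group
  rw [this, sq_rel, ← pow_mul]
  exact six

lemma tau_comm : τ₁ * τ₂ = τ₂ * τ₁⁻¹ := by
  rw [← conj_rel]; group

lemma tau_comm_pow (k : ℕ) : τ₁ ^ k * τ₂ = τ₂ * τ₁⁻¹ ^ k := by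
  induction k with
  | zero => simp
  | succ n ih =>
    calc τ₁ ^ (n + 1) * τ₂ = τ₁ ^ n * (τ₁ * τ₂) := by group
    _ = τ₁ ^ n * τ₂ * τ₁⁻¹ := by rw [tau_comm]; group
    _ = τ₂ * τ₁⁻¹ ^ n * τ₁⁻¹ := by rw [ih]
    _ = τ₂ * τ₁⁻¹ ^ (n + 1) := by group

def T (i : ZMod (2 * 3)) : H3 := τ₁ ^ i.val

lemma pow_mod (k : ℕ) : τ₁ ^ (k % 6) = τ₁ ^ k := by
  conv_rhs => rw [← Nat.div_add_mod k 6]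
  rw [pow_add, pow_mul, six, one_pow, one_mul]

lemma Tadd (i j : ZMod (2 * 3)) : T (i + j) = T i * T j := by
  unfold T
  rw [ZMod.val_add, pow_mod, pow_add]

lemma Tzero : T 0 = 1 := rfl

lemma Tneg (i : ZMod (2 * 3)) : T (-i) = (T i)⁻¹ := by
  apply eq_inv_of_mul_eq_one_left
  rw [← Tadd, neg_add_cancel, Tzero]

lemma Tcomm (i : ZMod (2 * 3)) : T i * τ₂ = τ₂ * T (-i) := by
  rw [Tneg]
  unfold T
  rw [tau_comm_pow, inv_pow]

lemma Tthree : T 3 = τ₁ ^ 3 := rfl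

def ψfun : QuaternionGroup 3 → H3
  | .a i => T i
  | .xa i => τ₂ * T i

def ψ : QuaternionGroup 3 →* H3 where
  toFun := ψfun
  map_one' := Tzero
  map_mul' := by
    rintro (i | i) (j | j)
    · rw [QuaternionGroup.a_mul_a]
      exact Tadd i j
    · rw [QuaternionGroup.a_mul_xa]
      show τ₂ * T (j - i) = T i * (τ₂ * T j)
      rw [← mul_assoc, Tcomm, mul_assoc, ← Tadd, neg_add_eq_sub]
    · rw [QuaternionGroup.xa_mul_a]
      show τ₂ * T (i + j) = τ₂ * T i * T j
      rw [Tadd, mul_assoc]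
    · rw [QuaternionGroup.xa_mul_xa]
      show T ((3 : ℕ) + j - i) = τ₂ * T i * (τ₂ * T j)
      have : τ₂ * T i * (τ₂ * T j) = τ₂ * (T i * τ₂) * T j := by group
      rw [this, Tcomm, show ((3:ℕ) : ZMod (2*3)) + j - i = 3 + (-i + j) by ring,
        Tadd, Tadd, Tthree, ← sq_rel, pow_two]
      group

def fQ : Fin 2 → QuaternionGroup 3 := ![QuaternionGroup.xa 1, QuaternionGroup.xa 5]

lemma fQ_rels : ∀ r ∈ H3Rels, FreeGroup.lift fQ r = 1 := by
  intro r hr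
  rcases Set.mem_insert_iff.mp hr with rfl | h
  · simp only [map_mul, map_inv, FreeGroup.lift_apply_of, fQ]
    decide
  · rcases h with rfl
    simp only [map_mul, FreeGroup.lift_apply_of, fQ]
    decide

def φ : H3 →* QuaternionGroup 3 := PresentedGroup.toGroup fQ_rels

lemma φ_q0 : φ (q 0) = QuaternionGroup.xa 1 := PresentedGroup.toGroup.of fQ_rels

lemma φ_q1 : φ (q 1) = QuaternionGroup.xa 5 := PresentedGroup.toGroup.of fQ_rels

lemma φ_tau1 : φ τ₁ = QuaternionGroup.a 1 := by
  rw [τ₁, map_mul, φ_q0, φ_q1]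
  decide

lemma φ_tau2 : φ τ₂ = QuaternionGroup.xa 0 := by
  rw [τ₂, map_mul, map_mul, φ_q0, φ_q1]
  decide

lemma tau21 : τ₂ * τ₁ = q 0 := by
  have key : q 1 * q 0 * (q 0 * q 1) = 1 := by
    rw [← tau1_inv, τ₁]
    group
  calc τ₂ * τ₁ = q 0 * (q 1 * q 0 * (q 0 * q 1)) := by unfold τ₂ τ₁; group
  _ = q 0 := by rw [key, mul_one]

lemma tau_q1 : τ₂ * τ₁ ^ 5 = q 1 := by
  have h5 : τ₁ ^ 5 = τ₁⁻¹ := by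
    have := six
    calc τ₁ ^ 5 = τ₁⁻¹ * τ₁ ^ 6 := by group
    _ = τ₁⁻¹ := by rw [six, mul_one]
  rw [h5, tau1_inv, tau2_alt]
  have := hurwitz
  calc q 1 * q 0 * q 1 * (q 1 * q 0) = q 1 * (q 0 * q 1 * q 1 * q 0) := by group
  _ = q 1 := by rw [hurwitz, mul_one]

lemma psi_phi : ψ.comp φ = MonoidHom.id H3 := by
  ext x
  fin_cases x
  · show ψ (φ (q 0)) = q 0
    rw [φ_q0]
    show τ₂ * T 1 = q 0
    have h1 : T 1 = τ₁ ^ 1 := rfl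
    rw [h1, pow_one]
    exact tau21
  · show ψ (φ (q 1)) = q 1
    rw [φ_q1]
    show τ₂ * T 5 = q 1
    have h1 : T 5 = τ₁ ^ 5 := rfl
    rw [h1]
    exact tau_q1

lemma phi_psi : φ.comp ψ = MonoidHom.id (QuaternionGroup 3) := by
  ext x
  rcases x with i | i
  · show φ (T i) = QuaternionGroup.a i
    unfold T
    rw [map_pow, φ_tau1, QuaternionGroup.a_one_pow, ZMod.natCast_val, ZMod.cast_id]
  · show φ (τ₂ * T i) = QuaternionGroup.xa i
    unfold T
    rw [map_mul, map_pow, φ_tau2, φ_tau1, QuaternionGroup.a_one_pow, ZMod.natCast_val,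
      ZMod.cast_id, QuaternionGroup.xa_mul_a, zero_add]

/-- `H₃` is the dicyclic group of order 12: it is isomorphic to `QuaternionGroup 3`,
and `τ₁ = q₁q₂`, `τ₂ = q₁q₂q₁` satisfy `ord τ₁ = 6`, `ord τ₂ = 4`, `τ₂⁻¹τ₁τ₂ = τ₁⁻¹`
and `τ₂² = τ₁³`. -/
theorem H3_is_dicyclic_of_order_12 :
    Nonempty (H3 ≃* QuaternionGroup 3) ∧
      orderOf τ₁ = 6 ∧ orderOf τ₂ = 4 ∧ τ₂⁻¹ * τ₁ * τ₂ = τ₁⁻¹ ∧ τ₂ ^ 2 = τ₁ ^ 3 := by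
  refine ⟨⟨MonoidHom.toMulEquiv φ ψ psi_phi phi_psi⟩, ?_, ?_, conj_rel, sq_rel⟩
  · have h1 : orderOf τ₁ ∣ 6 := orderOf_dvd_of_pow_eq_one six
    have h2 : (6 : ℕ) ∣ orderOf τ₁ := by
      have := orderOf_map_dvd φ τ₁
      rw [φ_tau1, QuaternionGroup.orderOf_a_one] at this
      exact this
    exact Nat.dvd_antisymm h1 h2
  · have h1 : orderOf τ₂ ∣ 4 := orderOf_dvd_of_pow_eq_one four
    have h2 : (4 : ℕ) ∣ orderOf τ₂ := by
      have := orderOf_map_dvd φ τ₂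
      rw [φ_tau2, QuaternionGroup.orderOf_xa] at this
      exact this
    exact Nat.dvd_antisymm h1 h2

end Stmt4
end

section
/- Let G be a finite group, H a subgroup of G, and h ∈ G. Let S = {k ∈ H : k is conjugate to h in G}, on which H acts by conjugation, and let h₁, …, h_u be representatives of the H-orbits on S. Then the number of cosets in G/H fixed by h (acting by translation) equals the sum over i = 1, …, u of the indices [Z_G(h_i) : Z_H(h_i)], where Z_G(h_i) is the centralizer of h_i in G and Z_H(h_i) = Z_G(h_i) ∩ H. -/
namespace Stmt10

/-- Counting fixed cosets (Centralizer counting): let `G` be a finite group, `H ≤ G` and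
`h ∈ G`. Let `S` be the set of elements of `H` that are `G`-conjugate to `h`, with `H`
acting on `S` by conjugation, and let `f 1, …, f u` be representatives of the `H`-orbits
on `S`. Then the number of cosets in `G/H` fixed by `h` equals
`∑ i, [Z_G(f i) : Z_H(f i)]`. -/
theorem fixed_cosets_eq_sum_centralizer_indices {G : Type*} [Group G] [Finite G]
    (H : Subgroup G) (h : G) (u : ℕ) (f : Fin u → G)
    (hmem : ∀ i, f i ∈ H ∧ IsConj h (f i))
    (hcover : ∀ k : G, k ∈ H → IsConj h k → ∃ i, ∃ a ∈ H, a * k * a⁻¹ = f i)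
    (hdistinct : ∀ i j, (∃ a ∈ H, a * f i * a⁻¹ = f j) → i = j) :
    Nat.card {x : G ⧸ H // h • x = x} =
      ∑ i : Fin u, H.relIndex (Subgroup.centralizer {f i}) := by
  classical
  -- fixedness criterion
  have fixed_iff : ∀ g : G, (h • (g : G ⧸ H) = g) ↔ g⁻¹ * h * g ∈ H := by
    intro g
    rw [show h • (g : G ⧸ H) = ((h * g : G) : G ⧸ H) from rfl, QuotientGroup.eq]
    constructor
    · intro hh
      have := H.inv_mem hh
      simpa [mul_assoc] using this
    · intro hh
      have := H.inv_mem hh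
      simpa [mul_assoc] using this
  -- uniqueness of the index attached to a fixed coset
  have key : ∀ (i j : Fin u) (g g' : G), (g : G ⧸ H) = (g' : G ⧸ H) →
      (∃ a ∈ H, a * (g⁻¹ * h * g) * a⁻¹ = f i) →
      (∃ a ∈ H, a * (g'⁻¹ * h * g') * a⁻¹ = f j) → i = j := by
    intro i j g g' hgg' ⟨a, haH, ha⟩ ⟨b, hbH, hb⟩
    have hm : g⁻¹ * g' ∈ H := (QuotientGroup.eq).mp hgg'
    refine hdistinct i j ⟨b * (g⁻¹ * g')⁻¹ * a⁻¹,
      H.mul_mem (H.mul_mem hbH (H.inv_mem hm)) (H.inv_mem haH), ?_⟩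
    rw [← ha, ← hb]
    group
  set Fix := {x : G ⧸ H // h • x = x} with hFixdef
  have outeq : ∀ q : G ⧸ H, ((q.out : G) : G ⧸ H) = q := fun q => q.out_eq
  -- choose index and conjugator for each fixed coset
  have exi : ∀ x : Fix, ∃ i : Fin u, ∃ a : G, a ∈ H ∧
      a * ((x.1.out)⁻¹ * h * x.1.out) * a⁻¹ = f i := by
    intro x
    have hfix : h • ((x.1.out : G) : G ⧸ H) = (x.1.out : G ⧸ H) := by
      rw [outeq]; exact x.2
    have hk : (x.1.out)⁻¹ * h * x.1.out ∈ H := (fixed_iff _).mp hfix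
    have hconj : IsConj h ((x.1.out)⁻¹ * h * x.1.out) :=
      isConj_iff.mpr ⟨(x.1.out)⁻¹, by group⟩
    obtain ⟨i, a, haH, ha⟩ := hcover _ hk hconj
    exact ⟨i, a, haH, ha⟩
  choose φ a haH ha using exi
  -- φ is determined by any representative
  have hφ : ∀ (x : Fix) (i : Fin u) (g : G), (g : G ⧸ H) = x.1 →
      (∃ b ∈ H, b * (g⁻¹ * h * g) * b⁻¹ = f i) → φ x = i := by
    intro x i g hg hex
    exact key (φ x) i x.1.out g (by rw [outeq, hg]) ⟨a x, haH x, ha x⟩ hex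
  -- decompose the fixed point set along φ
  have : Nat.card Fix = ∑ i : Fin u, Nat.card {x : Fix // φ x = i} := by
    have : Finite Fix := by
      have : Finite (G ⧸ H) := Quotient.finite _
      exact Subtype.finite
    have := Fintype.ofFinite Fix
    rw [Nat.card_congr (Equiv.sigmaFiberEquiv φ).symm]
    simp [Nat.card_eq_fintype_card, Fintype.card_sigma]
  rw [this]
  -- compute the cardinality of each fibre
  refine Finset.sum_congr rfl fun i _ => ?_
  obtain ⟨c, hc⟩ := isConj_iff.mp (hmem i).2
  set Z := Subgroup.centralizer {f i} with hZ
  -- the bijection fibre i ≃ Z ⧸ (H ∩ Z)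
  have memZ : ∀ z : G, z * f i * z⁻¹ = f i → z ∈ Z := by
    intro z hz
    refine Subgroup.mem_centralizer_singleton_iff.mpr ?_
    have := congrArg (· * z) hz
    simpa [mul_assoc] using this
  have hzmem : ∀ x : {x : Fix // φ x = i}, c * x.1.1.out * (a x.1)⁻¹ ∈ Z := by
    intro x
    apply memZ
    have h1 : a x.1 * ((x.1.1.out)⁻¹ * h * x.1.1.out) * (a x.1)⁻¹ = f i := by
      rw [ha x.1, x.2]
    conv_lhs => rw [← h1]
    conv_rhs => rw [← hc]
    group
  let toFun : {x : Fix // φ x = i} → Z ⧸ H.subgroupOf Z :=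
    fun x => QuotientGroup.mk ⟨c * x.1.1.out * (a x.1)⁻¹, hzmem x⟩
  have hbij : Function.Bijective toFun := by
    constructor
    · intro x y hxy
      have hxy' : (⟨c * x.1.1.out * (a x.1)⁻¹, hzmem x⟩ : Z)⁻¹ *
          ⟨c * y.1.1.out * (a y.1)⁻¹, hzmem y⟩ ∈ H.subgroupOf Z :=
        (QuotientGroup.eq).mp hxy
      have hmem' : (c * x.1.1.out * (a x.1)⁻¹)⁻¹ * (c * y.1.1.out * (a y.1)⁻¹) ∈ H := by
        simpa [Subgroup.mem_subgroupOf] using hxy'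
      have hmem'' : (x.1.1.out)⁻¹ * y.1.1.out ∈ H := by
        have e : (x.1.1.out)⁻¹ * y.1.1.out =
            (a x.1)⁻¹ * ((c * x.1.1.out * (a x.1)⁻¹)⁻¹ * (c * y.1.1.out * (a y.1)⁻¹)) *
              a y.1 := by group
        rw [e]
        exact H.mul_mem (H.mul_mem (H.inv_mem (haH x.1)) hmem') (haH y.1)
      have : (x.1.1.out : G ⧸ H) = (y.1.1.out : G ⧸ H) := (QuotientGroup.eq).mpr hmem''
      rw [outeq, outeq] at this
      exact Subtype.ext (Subtype.ext this)
    · rintro q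
      obtain ⟨⟨z, hzZ⟩, rfl⟩ := QuotientGroup.mk_surjective q
      -- the coset c⁻¹ z H is a fixed point with invariant i
      have hzc : z * f i = f i * z := Subgroup.mem_centralizer_singleton_iff.mp hzZ
      have hconj : (c⁻¹ * z)⁻¹ * h * (c⁻¹ * z) = f i := by
        have : (c⁻¹ * z)⁻¹ * h * (c⁻¹ * z) = z⁻¹ * (c * h * c⁻¹) * z := by group
        rw [this, hc]
        rw [mul_assoc, ← hzc, ← mul_assoc, inv_mul_cancel, one_mul]
      have hfx : h • ((c⁻¹ * z : G) : G ⧸ H) = ((c⁻¹ * z : G) : G ⧸ H) :=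
        (fixed_iff _).mpr (hconj ▸ (hmem i).1)
      set x : Fix := ⟨((c⁻¹ * z : G) : G ⧸ H), hfx⟩ with hxdef
      have hφx : φ x = i := hφ x i (c⁻¹ * z) rfl ⟨1, H.one_mem, by
        simpa using hconj⟩
      refine ⟨⟨x, hφx⟩, ?_⟩
      -- show toFun x = ↑z
      have hout : ((x.1.out : G) : G ⧸ H) = ((c⁻¹ * z : G) : G ⧸ H) := outeq _
      have houtH : (x.1.out)⁻¹ * (c⁻¹ * z) ∈ H := (QuotientGroup.eq).mp hout
      apply (QuotientGroup.eq).mpr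
      rw [Subgroup.mem_subgroupOf]
      show (c * x.1.out * (a x)⁻¹)⁻¹ * z ∈ H
      have e : (c * x.1.out * (a x)⁻¹)⁻¹ * z =
          a x * ((x.1.out)⁻¹ * (c⁻¹ * z)) := by group
      rw [e]
      exact H.mul_mem (haH x) houtH
  calc Nat.card {x : Fix // φ x = i} = Nat.card (Z ⧸ H.subgroupOf Z) :=
        Nat.card_congr (Equiv.ofBijective toFun hbij)
    _ = H.relIndex Z := rfl

end Stmt10
end

section
/- Let G be the alternating group A₅ on 5 letters, let X be the set of its Sylow 5-subgroups (a set of cardinality 6 on which G acts by conjugation), let W be the 𝔽₂-vector space of functions X → ℤ/2 with the permutation action of G, and let M = W/⟨𝟙⟩ be the quotient by the line spanned by the constant function 𝟙. Then the action of G on the set of nonzero elements of M has exactly three orbits, of cardinalities 15, 10 and 6. Moreover: the orbit of size 15 consists exactly of the nonzero elements of the image V in M of the subspace {f ∈ W : Σ_{x∈X} f(x) = 0}; the orbit of size 10 consists exactly of the nonzero elements of M fixed by some element of G of order 3; and the orbit of size 6 consists exactly of the nonzero elements of M fixed by some element of G of order 5. -/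
namespace Stmt12

/-- `G = A₅`, the alternating group on 5 letters. -/
abbrev G : Type := ↥(alternatingGroup (Fin 5))

/-- `X`, the set of Sylow 5-subgroups of `A₅` (with `A₅` acting by conjugation). -/
abbrev X : Type := Sylow 5 G

instance : Finite X :=
  Finite.of_injective (fun P : X => (P : Subgroup G)) fun _ _ h => Sylow.ext h

noncomputable instance : Fintype X := Fintype.ofFinite X

/-- `W = 𝔽₂^X`, the permutation module of functions `X → ℤ/2`. -/
abbrev W : Type := X → ZMod 2

/-- The constant function `𝟙 ∈ W`. -/
def one1 : W := fun _ => 1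

/-- The line spanned by `𝟙`. -/
def lineW : Submodule (ZMod 2) W := Submodule.span (ZMod 2) {one1}

/-- `M = W/⟨𝟙⟩`. -/
abbrev M : Type := W ⧸ lineW

/-- The permutation action of `g ∈ A₅` on `W`: `(g • f)(x) = f(g⁻¹ • x)`. -/
def permW (g : G) : W →ₗ[ZMod 2] W :=
  LinearMap.funLeft (ZMod 2) (ZMod 2) (fun P : X => g⁻¹ • P)

lemma permW_line (g : G) : lineW ≤ lineW.comap (permW g) := by
  rw [lineW, Submodule.span_le]
  rintro w hw
  rcases Set.mem_singleton_iff.mp hw with rfl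
  have h1 : permW g one1 = one1 := rfl
  simpa [Submodule.mem_comap, h1, lineW] using Submodule.mem_span_singleton_self one1

/-- The induced action of `g ∈ A₅` on `M = W/⟨𝟙⟩`. -/
def actM (g : G) : M →ₗ[ZMod 2] M := Submodule.mapQ lineW lineW (permW g) (permW_line g)

/-- The augmentation map `W → ℤ/2`, `f ↦ Σ_x f(x)`. -/
noncomputable def sumW : W →ₗ[ZMod 2] ZMod 2 where
  toFun f := ∑ P : X, f P
  map_add' f g := by simp [Finset.sum_add_distrib]
  map_smul' c f := by simp [Finset.mul_sum]

/-- `V ⊆ M`, the image in `M` of the augmentation kernel of `W`. -/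
noncomputable def V : Submodule (ZMod 2) M := (LinearMap.ker sumW).map lineW.mkQ

/-- The `A₅`-orbit of `m ∈ M`. -/
def Orb (m : M) : Set M := {m' | ∃ g : G, actM g m = m'}

open MulAction

instance : Fact (Nat.Prime 5) := ⟨by norm_num⟩
noncomputable instance : DecidableEq X := Classical.decEq X

lemma cardG : Nat.card G = 60 := by
  show Nat.card ↥(alternatingGroup (Fin 5)) = 60
  have h := two_mul_card_alternatingGroup (α := Fin 5)
  rw [Fintype.card_perm] at h
  rw [show (Fintype.card (Fin 5)).factorial = 120 from rfl] at h
  rw [← Nat.card_eq_fintype_card] at h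
  omega

lemma cardP (P : X) : Nat.card (P : Subgroup G) = 5 := by
  have h := Sylow.card_eq_multiplicity P
  rw [cardG] at h
  rw [h, show Nat.factorization 60 5 = 1 from ?_, pow_one]
  rw [show (60:ℕ) = 5 * 12 by norm_num, Nat.factorization_mul (by norm_num) (by norm_num)]
  rw [Nat.Prime.factorization (by norm_num)]
  simp [Nat.factorization_eq_zero_of_not_dvd (show ¬ (5:ℕ) ∣ 12 by norm_num)]

lemma cardX : Nat.card X = 6 := by
  obtain ⟨P⟩ : Nonempty X := Sylow.nonempty
  have hdvd : Nat.card X ∣ 60 := by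
    rw [Sylow.card_eq_card_quotient_normalizer P, ← cardG]
    exact Subgroup.card_quotient_dvd_card _
  have hmod : Nat.card X % 5 = 1 := card_sylow_modEq_one 5 G
  have hb := Nat.le_of_dvd (by norm_num) hdvd
  have h16 : Nat.card X = 1 ∨ Nat.card X = 6 := by
    interval_cases h : (Nat.card X) <;> revert hdvd hmod <;> decide
  rcases h16 with h1 | h6
  · exfalso
    have hsub : Subsingleton X := (Nat.card_eq_one_iff_unique.mp h1).1
    have hnorm : Subgroup.normalizer ((P : Subgroup G) : Set G) = ⊤ := by
      rw [eq_top_iff]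
      intro g _
      exact Sylow.smul_eq_iff_mem_normalizer.mp (Subsingleton.elim _ _)
    have hNormal : (P : Subgroup G).Normal := Subgroup.normalizer_eq_top_iff.mp hnorm
    rcases hNormal.eq_bot_or_eq_top with hb' | ht
    · have := cardP P; rw [hb', Subgroup.card_bot] at this; norm_num at this
    · have := cardP P; rw [ht, Subgroup.card_top, cardG] at this; norm_num at this
  · exact h6

lemma card_normalizer (P : X) : Nat.card (Subgroup.normalizer ((P : Subgroup G) : Set G)) = 10 := by
  have h1 : Nat.card (G ⧸ Subgroup.normalizer ((P : Subgroup G) : Set G)) = 6 := by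
    have h0 := Sylow.card_eq_card_quotient_normalizer P; rw [cardX] at h0; exact h0.symm
  have h2 := Subgroup.card_eq_card_quotient_mul_card_subgroup (Subgroup.normalizer ((P : Subgroup G) : Set G))
  rw [cardG, h1] at h2
  omega

lemma card_stabilizer (P : X) : Nat.card (stabilizer G P) = 10 := by
  rw [P.stabilizer_eq_normalizer]; exact card_normalizer P

/-- The permutation representation of `G` on `X`. -/
noncomputable def σ : G →* Equiv.Perm X := MulAction.toPermHom G X

lemma σ_apply (g : G) (P : X) : σ g P = g • P := rfl

lemma σ_inj : Function.Injective σ := by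
  rw [← MonoidHom.ker_eq_bot_iff]
  rcases (MonoidHom.normal_ker σ).eq_bot_or_eq_top with h | h
  · exact h
  · exfalso
    have hnt : Nontrivial X := (Finite.one_lt_card_iff_nontrivial (α := X)).mp (by rw [cardX]; norm_num)
    obtain ⟨P, Q, hPQ⟩ := hnt
    obtain ⟨g, hg⟩ := MulAction.exists_smul_eq G P Q
    have hmem : g ∈ σ.ker := h ▸ Subgroup.mem_top g
    have h1 : σ g = 1 := hmem
    apply hPQ
    rw [← hg, ← σ_apply, h1, Equiv.Perm.one_apply]

lemma sign_σ (g : G) : Equiv.Perm.sign (σ g) = 1 := by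
  set φ := (Equiv.Perm.sign).comp σ with hφ
  rcases (MonoidHom.normal_ker φ).eq_bot_or_eq_top with h | h
  · exfalso
    have hinj : Function.Injective φ := MonoidHom.ker_eq_bot_iff φ |>.mp h
    have hle := Nat.card_le_card_of_injective φ hinj
    rw [cardG, Nat.card_eq_fintype_card, Fintype.card_units_int] at hle
    omega
  · have hmem : g ∈ φ.ker := h ▸ Subgroup.mem_top g
    exact hmem

lemma orderOf_σ (g : G) : orderOf (σ g) = orderOf g := orderOf_injective σ σ_inj g

lemma order3_not_fix {g : G} (h3 : orderOf g = 3) (P : X) : g • P ≠ P := by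
  intro h
  have hg : g ∈ stabilizer G P := h
  have hd := Subgroup.orderOf_dvd_natCard _ hg
  rw [h3, card_stabilizer] at hd
  norm_num at hd

lemma order5_fix {g : G} (h5 : orderOf g = 5) : ∃! P : X, g • P = P := by
  have hp : IsPGroup 5 (Subgroup.zpowers g) :=
    IsPGroup.of_card (n := 1) (by rw [Nat.card_zpowers, h5, pow_one])
  obtain ⟨P, hP⟩ := hp.exists_le_sylow
  have key : ∀ Q : X, g • Q = Q → (Q : Subgroup G) = Subgroup.zpowers g := by
    intro Q hQ
    have hgN : g ∈ Subgroup.normalizer ((Q : Subgroup G) : Set G) := Sylow.smul_eq_iff_mem_normalizer.mp hQ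
    set K := Subgroup.normalizer ((Q : Subgroup G) : Set G) with hK
    have hQK : (Q : Subgroup G) ≤ K := Subgroup.le_normalizer
    set Q' := (Q : Subgroup G).subgroupOf K with hQ'
    have hcQ' : Nat.card Q' = 5 := by
      rw [Nat.card_congr (Subgroup.subgroupOfEquivOfLe hQK).toEquiv]; exact cardP Q
    have hcK : Nat.card K = 10 := card_normalizer Q
    have hquot : Nat.card (K ⧸ Q') = 2 := by
      have h := Subgroup.card_eq_card_quotient_mul_card_subgroup Q'
      rw [hcK, hcQ'] at h
      omega
    set gK : K := ⟨g, hgN⟩ with hgK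
    have hog : orderOf gK = 5 := by
      rw [← orderOf_injective K.subtype Subtype.coe_injective gK]
      exact h5
    have hd1 := orderOf_map_dvd (QuotientGroup.mk' Q') gK
    rw [hog] at hd1
    have hd2 := orderOf_dvd_natCard (QuotientGroup.mk' Q' gK)
    rw [hquot] at hd2
    have hord1 : orderOf (QuotientGroup.mk' Q' gK) = 1 := by
      have hg12 := Nat.dvd_gcd hd2 hd1
      rw [show Nat.gcd 2 5 = 1 from rfl] at hg12
      exact Nat.dvd_one.mp hg12
    have h4 : QuotientGroup.mk' Q' gK = 1 := orderOf_eq_one_iff.mp hord1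
    have hgQ' : gK ∈ Q' := (QuotientGroup.eq_one_iff gK).mp h4
    have hgQ : g ∈ (Q : Subgroup G) := hgQ'
    have hle : Subgroup.zpowers g ≤ (Q : Subgroup G) := Subgroup.zpowers_le.mpr hgQ
    symm
    apply Subgroup.eq_of_le_of_card_ge hle
    rw [cardP Q, Nat.card_zpowers, h5]
  have hgP : g • P = P := by
    rw [Sylow.smul_eq_iff_mem_normalizer]
    exact Subgroup.le_normalizer (hP (Subgroup.mem_zpowers g))
  exact ⟨P, hgP, fun Q hQ => Sylow.ext (by rw [key Q hQ, key P hgP])⟩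

set_option maxRecDepth 40000 in
lemma no_order4 (g : G) : orderOf g ≠ 4 := by
  intro h4
  have key : ∀ τ : Equiv.Perm (Fin 5), τ^4 = 1 → τ^2 = 1 ∨ Equiv.Perm.sign τ ≠ 1 := by decide
  set τ : Equiv.Perm (Fin 5) := ((g : alternatingGroup (Fin 5)) : Equiv.Perm (Fin 5)) with hτ
  have hτo : orderOf τ = 4 := by
    rw [← h4]
    exact orderOf_injective (alternatingGroup (Fin 5)).subtype Subtype.coe_injective g
  have h1 : τ^4 = 1 := by rw [← hτo]; exact pow_orderOf_eq_one τ
  have h2 : τ^2 ≠ 1 := by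
    intro h
    have hd := orderOf_dvd_of_pow_eq_one h
    rw [hτo] at hd
    norm_num at hd
  have h3 : Equiv.Perm.sign τ = 1 := Equiv.Perm.mem_alternatingGroup.mp g.2
  rcases key τ h1 with h | h
  · exact h2 h
  · exact h h3

lemma hX6 : Fintype.card X = 6 := by rw [← Nat.card_eq_fintype_card]; exact cardX

/-- The fixed-point set of `g` on `X`. -/
noncomputable def fixf (g : G) : Finset X := Finset.univ.filter (fun x => g • x = x)

lemma mem_fixf {g : G} {x : X} : x ∈ fixf g ↔ g • x = x := by simp [fixf]

lemma order2_fix (g : G) (h2 : orderOf g = 2) : (fixf g).card = 2 := by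
  set τ := σ g with hτ
  have hτo : orderOf τ = 2 := by rw [orderOf_σ]; exact h2
  have hct : ∀ n ∈ τ.cycleType, n = 2 := by
    intro n hn
    have hdvd : n ∣ 2 := by
      have := Multiset.dvd_lcm hn
      rwa [Equiv.Perm.lcm_cycleType, hτo] at this
    have h2le := Equiv.Perm.two_le_of_mem_cycleType hn
    exact Nat.le_antisymm (Nat.le_of_dvd (by norm_num) hdvd) h2le
  have hrep : τ.cycleType = Multiset.replicate (Multiset.card τ.cycleType) 2 :=
    Multiset.eq_replicate_card.mpr hct
  set c := Multiset.card τ.cycleType with hc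
  have hsum : τ.support.card = 2 * c := by
    rw [← Equiv.Perm.sum_cycleType, hrep, Multiset.sum_replicate, smul_eq_mul, mul_comm]
  have hsign := Equiv.Perm.sign_of_cycleType τ
  rw [sign_σ, hrep] at hsign
  have hceven : Even c := by
    rw [Multiset.sum_replicate, Multiset.card_replicate, smul_eq_mul] at hsign
    have h2' : ((-1 : ℤˣ)) ^ (c * 2 + c) = 1 := hsign.symm
    have hev := (neg_one_pow_eq_one_iff_even (R := ℤˣ) (by decide)).mp h2'
    rw [Nat.even_iff] at hev ⊢
    omega
  have hc0 : c ≠ 0 := by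
    intro h0
    have : τ.cycleType = 0 := by rw [hrep, h0, Multiset.replicate_zero]
    have hτ1 : τ = 1 := Equiv.Perm.cycleType_eq_zero.mp this
    rw [hτ1, orderOf_one] at hτo
    norm_num at hτo
  have hsle : τ.support.card ≤ 6 := hX6 ▸ Finset.card_le_univ _
  have hc2 : c = 2 := by
    rw [Nat.even_iff] at hceven
    omega
  have hfix : fixf g = τ.supportᶜ := by
    ext x
    rw [mem_fixf, Finset.mem_compl, Equiv.Perm.notMem_support]
    rfl
  rw [hfix, Finset.card_compl, hX6, hsum, hc2]

lemma order2_exists_fix (g : G) (h2 : orderOf g = 2) : ∃ x : X, g • x = x := by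
  have := order2_fix g h2
  have hpos : 0 < (fixf g).card := by omega
  obtain ⟨x, hx⟩ := Finset.card_pos.mp hpos
  exact ⟨x, mem_fixf.mp hx⟩

lemma eq_one_of_fixes (g : G) (s : Finset X) (hs : 3 ≤ s.card) (hfix : ∀ x ∈ s, g • x = x) :
    g = 1 := by
  by_contra hg
  have hn1 : orderOf g ≠ 1 := fun h => hg (orderOf_eq_one_iff.mp h)
  have hn0 : orderOf g ≠ 0 := by
    have : IsOfFinOrder g := isOfFinOrder_of_finite g
    exact this.orderOf_pos.ne'
  set n := orderOf g with hn
  set p := n.minFac with hp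
  have hpp : p.Prime := Nat.minFac_prime hn1
  have hpdvd : p ∣ n := Nat.minFac_dvd n
  set h := g ^ (n / p) with hh
  have hho : orderOf h = p := by
    rw [hh, orderOf_pow]
    rw [← hn, Nat.gcd_eq_right (Nat.div_dvd_of_dvd hpdvd), Nat.div_div_self hpdvd hn0]
  have hfixh : ∀ x ∈ s, h • x = x := by
    intro x hx
    have hgx : g ∈ MulAction.stabilizer G x := hfix x hx
    have : h ∈ MulAction.stabilizer G x := pow_mem hgx _
    exact this
  have hp60 : p ∣ 60 := by
    calc p ∣ n := hpdvd
    _ ∣ Nat.card G := orderOf_dvd_natCard g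
    _ = 60 := cardG
  have hp235 : p = 2 ∨ p = 3 ∨ p = 5 := by
    have hb := Nat.le_of_dvd (by norm_num) hp60
    interval_cases p <;> revert hpp hp60 <;> decide
  rcases hp235 with h2 | h3 | h5
  · have hcard := order2_fix h (h2 ▸ hho)
    have hsub : s ⊆ fixf h := fun x hx => mem_fixf.mpr (hfixh x hx)
    have := Finset.card_le_card hsub
    omega
  · obtain ⟨x, hx⟩ := Finset.card_pos.mp (by omega : 0 < s.card)
    exact order3_not_fix (h3 ▸ hho) x (hfixh x hx)
  · obtain ⟨P, _, huniq⟩ := order5_fix (h5 ▸ hho)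
    obtain ⟨x, hx, y, hy, hxy⟩ := Finset.one_lt_card.mp (by omega : 1 < s.card)
    exact hxy (by rw [huniq x (hfixh x hx), huniq y (hfixh y hy)])

lemma orbit_stab {H : Type*} [Group H] {β : Type*} [MulAction H β] (b : β) :
    Nat.card (MulAction.orbit H b) * Nat.card (MulAction.stabilizer H b) = Nat.card H := by
  rw [Nat.card_congr (MulAction.orbitEquivQuotientStabilizer H b)]
  exact (Subgroup.card_eq_card_quotient_mul_card_subgroup _).symm

lemma two_trans (P Q R : X) (hQ : Q ≠ P) (hR : R ≠ P) : ∃ g : G, g • P = P ∧ g • Q = R := by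
  classical
  set K := MulAction.stabilizer G P with hK
  have hKcard : Nat.card K = 10 := card_stabilizer P
  have horb : (MulAction.orbit K Q) ⊆ {x : X | x ≠ P} := by
    rintro x ⟨k, rfl⟩
    intro hx
    apply hQ
    have hkP : (k : G) • P = P := k.2
    have hx' : (k : G) • Q = P := hx
    exact smul_left_cancel _ (hx'.trans hkP.symm)
  have hcompl : Set.ncard {x : X | x ≠ P} = 5 := by
    have he : {x : X | x ≠ P} = (Set.univ \ {P} : Set X) := by ext x; simp
    rw [he, Set.ncard_diff (by simp), Set.ncard_univ, cardX, Set.ncard_singleton]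
  have hstab_ne5 : ¬ (5 ∣ Nat.card (MulAction.stabilizer K Q)) := by
    intro h5
    obtain ⟨k, hk⟩ := exists_prime_orderOf_dvd_card' 5 h5
    have hko : orderOf ((k : K) : G) = 5 :=
      ((orderOf_injective K.subtype Subtype.coe_injective _).trans
        (orderOf_injective (MulAction.stabilizer K Q).subtype Subtype.coe_injective k)).trans hk
    obtain ⟨Pt, _, huniq⟩ := order5_fix hko
    apply hQ
    have h1 : ((k : K) : G) • P = P := (k : K).2
    have h2 : ((k : K) : G) • Q = Q := k.2
    rw [huniq Q h2, huniq P h1]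
  have hdvd : Nat.card (MulAction.stabilizer K Q) ∣ 10 := by
    rw [← hKcard]; exact Subgroup.card_subgroup_dvd_card _
  have hmul := orbit_stab (H := K) Q
  rw [hKcard] at hmul
  have hle : Nat.card (MulAction.orbit K Q) ≤ 5 := by
    rw [Nat.card_coe_set_eq]
    exact le_trans (Set.ncard_le_ncard horb (Set.toFinite _)) (le_of_eq hcompl)
  haveI : Nonempty ↥(MulAction.stabilizer K Q) := ⟨1⟩
  have hdpos : 0 < Nat.card (MulAction.stabilizer K Q) := Nat.card_pos
  have hdle : Nat.card (MulAction.stabilizer K Q) ≤ 10 := Nat.le_of_dvd (by norm_num) hdvd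
  have ho5 : Nat.card (MulAction.orbit K Q) = 5 := by
    set d := Nat.card (MulAction.stabilizer K Q)
    set o := Nat.card (MulAction.orbit K Q)
    interval_cases d <;> omega
  have horbeq : MulAction.orbit K Q = {x : X | x ≠ P} := by
    apply Set.eq_of_subset_of_ncard_le horb _ (Set.toFinite _)
    rw [hcompl, Nat.card_coe_set_eq] at *
    omega
  have hRorb : R ∈ MulAction.orbit K Q := by rw [horbeq]; exact hR
  obtain ⟨k, hk⟩ := hRorb
  exact ⟨(k : G), k.2, hk⟩


/-! ### Indicator functions and classes of subsets -/

noncomputable def ind (s : Finset X) : W := fun x => if x ∈ s then 1 else 0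

lemma ind_compl (s : Finset X) : ind sᶜ = ind s + one1 := by
  funext x
  by_cases h : x ∈ s <;> simp [ind, one1, h] <;> decide

lemma ind_inj {s t : Finset X} (h : ind s = ind t) : s = t := by
  ext x
  have hx := congrFun h x
  by_cases hs : x ∈ s <;> by_cases ht : x ∈ t <;> simp [ind, hs, ht] at hx ⊢

lemma mem_lineW (w : W) : w ∈ lineW ↔ w = 0 ∨ w = one1 := by
  rw [lineW, Submodule.mem_span_singleton]
  constructor
  · rintro ⟨c, rfl⟩
    fin_cases c
    · left; exact zero_smul _ _
    · right; exact one_smul _ _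
  · rintro (rfl | rfl)
    · exact ⟨0, by simp⟩
    · exact ⟨1, by simp⟩

noncomputable def cl (s : Finset X) : M := lineW.mkQ (ind s)

lemma cl_compl (s : Finset X) : cl sᶜ = cl s := by
  unfold cl
  rw [ind_compl, map_add]
  have h1 : lineW.mkQ one1 = 0 := by
    rw [Submodule.mkQ_apply, Submodule.Quotient.mk_eq_zero]
    exact Submodule.mem_span_singleton_self one1
  rw [h1, add_zero]

lemma cl_eq_cl_iff {s t : Finset X} : cl s = cl t ↔ s = t ∨ s = tᶜ := by
  constructor
  · intro h
    unfold cl at h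
    rw [Submodule.mkQ_apply, Submodule.mkQ_apply, Submodule.Quotient.eq] at h
    rcases (mem_lineW _).mp h with h0 | h1
    · left; exact ind_inj (sub_eq_zero.mp h0)
    · right
      apply ind_inj
      rw [ind_compl]
      rw [sub_eq_iff_eq_add] at h1
      rw [h1, add_comm]
  · rintro (rfl | rfl)
    · rfl
    · exact cl_compl t

lemma cl_empty : cl (∅ : Finset X) = 0 := by
  unfold cl
  have : ind (∅ : Finset X) = 0 := by funext x; simp [ind]
  rw [this, map_zero]

lemma cl_zero_iff {s : Finset X} : cl s = 0 ↔ s = ∅ ∨ s = Finset.univ := by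
  rw [← cl_empty, cl_eq_cl_iff, Finset.compl_empty]

lemma surj (m : M) : ∃ s : Finset X, m = cl s := by
  obtain ⟨w, rfl⟩ := lineW.mkQ_surjective m
  refine ⟨Finset.univ.filter (fun x => w x = 1), ?_⟩
  unfold cl
  congr 1
  funext x
  by_cases h : w x = 1 <;> simp [ind, h]
  · rcases (show w x = 0 ∨ w x = 1 by revert h; generalize w x = a; revert a; decide) with h0 | h1
    · exact h0
    · exact absurd h1 h

/-! ### The action on classes -/

noncomputable def sm (g : G) (s : Finset X) : Finset X := s.image (fun x => g • x)

lemma mem_sm {g : G} {s : Finset X} {x : X} : x ∈ sm g s ↔ g⁻¹ • x ∈ s := by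
  unfold sm
  rw [Finset.mem_image]
  constructor
  · rintro ⟨y, hy, rfl⟩
    rwa [inv_smul_smul]
  · intro h
    exact ⟨g⁻¹ • x, h, smul_inv_smul g x⟩

lemma card_sm (g : G) (s : Finset X) : (sm g s).card = s.card :=
  Finset.card_image_of_injective _ (MulAction.injective g)

lemma permW_ind (g : G) (s : Finset X) : permW g (ind s) = ind (sm g s) := by
  funext x
  show ind s (g⁻¹ • x) = ind (sm g s) x
  by_cases h : g⁻¹ • x ∈ s <;> simp [ind, h, mem_sm]

lemma act_cl (g : G) (s : Finset X) : actM g (cl s) = cl (sm g s) := by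
  unfold cl actM
  rw [Submodule.mkQ_apply, Submodule.mkQ_apply, Submodule.mapQ_apply, permW_ind]

lemma sm_sm (g h : G) (s : Finset X) : sm g (sm h s) = sm (g * h) s := by
  unfold sm
  rw [Finset.image_image]
  congr 1
  funext x
  simp [mul_smul]

lemma sm_one (s : Finset X) : sm 1 s = s := by
  ext x; simp [mem_sm]

lemma sm_compl (g : G) (s : Finset X) : sm g sᶜ = (sm g s)ᶜ := by
  ext x; simp [mem_sm]

noncomputable instance : MulAction G M where
  smul g m := actM g m
  one_smul m := by
    obtain ⟨s, rfl⟩ := surj m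
    show actM 1 (cl s) = cl s
    rw [act_cl, sm_one]
  mul_smul g h m := by
    obtain ⟨s, rfl⟩ := surj m
    show actM (g * h) (cl s) = actM g (actM h (cl s))
    rw [act_cl, act_cl, act_cl, sm_sm]

lemma smul_M_def (g : G) (m : M) : g • m = actM g m := rfl

lemma Orb_eq_orbit (m : M) : Orb m = MulAction.orbit G m := by
  ext m'
  rw [MulAction.mem_orbit_iff]
  rfl

lemma sum_ind (s : Finset X) : sumW (ind s) = (s.card : ZMod 2) := by
  show (∑ P : X, ind s P) = _
  unfold ind
  rw [Finset.sum_ite_mem, Finset.univ_inter, Finset.sum_const, nsmul_eq_mul, mul_one]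

lemma mem_V_iff (s : Finset X) : cl s ∈ V ↔ Even s.card := by
  have hle : s.card ≤ 6 := by rw [← hX6]; exact Finset.card_le_univ s
  constructor
  · rintro ⟨f, hf, hmk⟩
    have hf0 : sumW f = 0 := hf
    have heq : lineW.mkQ f = lineW.mkQ (ind s) := hmk
    rw [Submodule.mkQ_apply, Submodule.mkQ_apply, Submodule.Quotient.eq] at heq
    rcases (mem_lineW _).mp heq with h0 | h1
    · have : f = ind s := sub_eq_zero.mp h0
      rw [this, sum_ind] at hf0
      have := (ZMod.natCast_eq_zero_iff _ 2).mp hf0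
      exact even_iff_two_dvd.mpr this
    · have : f = ind sᶜ := by
        rw [ind_compl]
        rw [sub_eq_iff_eq_add] at h1
        rw [h1, add_comm]
      rw [this, sum_ind] at hf0
      have h2 := (ZMod.natCast_eq_zero_iff _ 2).mp hf0
      rw [Finset.card_compl, hX6] at h2
      rw [Nat.even_iff]; omega
  · intro he
    refine ⟨ind s, ?_, rfl⟩
    show sumW (ind s) = 0
    rw [sum_ind, (ZMod.natCast_eq_zero_iff _ 2)]
    exact even_iff_two_dvd.mp he

/-! ### No element can swap a class with its complement -/

lemma no_swap (g : G) (s : Finset X) : sm g s ≠ sᶜ := by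
  intro hsw
  have hle : s.card ≤ 6 := by rw [← hX6]; exact Finset.card_le_univ s
  have hcard : s.card = 3 := by
    have h1 := card_sm g s
    rw [hsw, Finset.card_compl, hX6] at h1
    omega
  have hne : s ≠ sᶜ := by
    intro h
    obtain ⟨x, hx⟩ := Finset.card_pos.mp (by omega : 0 < s.card)
    have : x ∈ sᶜ := h ▸ hx
    rw [Finset.mem_compl] at this
    exact this hx
  have hpar : ∀ k : ℕ, sm (g ^ k) s = (if Even k then s else sᶜ) := by
    intro k
    induction k with
    | zero => rw [pow_zero, sm_one, if_pos Even.zero]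
    | succ k ih =>
      rw [pow_succ, ← sm_sm, hsw, sm_compl, ih]
      by_cases hk : Even k
      · rw [if_pos hk, if_neg (by simp [Nat.even_add_one, hk])]
      · rw [if_neg hk, compl_compl, if_pos (by simp [Nat.even_add_one, hk])]
  have hn0 : orderOf g ≠ 0 := (isOfFinOrder_of_finite g).orderOf_pos.ne'
  set n := orderOf g with hn
  have hsn : sm (g ^ n) s = s := by rw [pow_orderOf_eq_one, sm_one]
  have hneven : Even n := by
    by_contra hodd
    rw [hpar n, if_neg hodd] at hsn
    exact hne hsn.symm
  have h2d : 2 ∣ n := hneven.two_dvd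
  have h4 : ¬ (4 ∣ n) := by
    intro h4d
    apply no_order4 (g ^ (n / 4))
    rw [orderOf_pow, ← hn, Nat.gcd_eq_right (Nat.div_dvd_of_dvd h4d), Nat.div_div_self h4d hn0]
  have hodd2 : ¬ Even (n / 2) := by
    intro he
    apply h4
    rw [Nat.even_iff] at he
    omega
  have hto : orderOf (g ^ (n / 2)) = 2 := by
    rw [orderOf_pow, ← hn, Nat.gcd_eq_right (Nat.div_dvd_of_dvd h2d), Nat.div_div_self h2d hn0]
  have hswap : sm (g ^ (n / 2)) s = sᶜ := by rw [hpar (n / 2), if_neg hodd2]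
  obtain ⟨x, hx⟩ := order2_exists_fix _ hto
  by_cases hxs : x ∈ s
  · have hmem : (g ^ (n / 2)) • x ∈ sm (g ^ (n / 2)) s := Finset.mem_image_of_mem _ hxs
    rw [hx, hswap, Finset.mem_compl] at hmem
    exact hmem hxs
  · have hxc : x ∈ sᶜ := Finset.mem_compl.mpr hxs
    have hmem : (g ^ (n / 2)) • x ∈ sm (g ^ (n / 2)) sᶜ := Finset.mem_image_of_mem _ hxc
    rw [hx, sm_compl, hswap, compl_compl] at hmem
    exact hxs hmem

lemma fix_cl_iff {g : G} {s : Finset X} : actM g (cl s) = cl s ↔ sm g s = s := by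
  rw [act_cl, cl_eq_cl_iff]
  constructor
  · rintro (h | h)
    · exact h
    · exact absurd h (no_swap g s)
  · exact Or.inl

/-! ### The three families of classes -/

instance : Finite M := Quotient.finite _

def A1 : Set M := {m | ∃ x : X, m = cl {x}}
def A2 : Set M := {m | ∃ s : Finset X, s.card = 2 ∧ m = cl s}
def A3 : Set M := {m | ∃ s : Finset X, s.card = 3 ∧ m = cl s}

lemma smul_ne_zero_M (h : G) {m : M} (hm : m ≠ 0) : actM h m ≠ 0 := by
  intro h0
  apply hm
  have : actM h⁻¹ (actM h m) = m := by
    show h⁻¹ • (h • m) = m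
    rw [inv_smul_smul]
  rw [← this, h0, map_zero]

lemma sm_singleton (g : G) (x : X) : sm g {x} = {g • x} := by
  ext y
  rw [mem_sm, Finset.mem_singleton, Finset.mem_singleton]
  constructor
  · intro h
    rw [← h, smul_inv_smul]
  · rintro rfl
    rw [inv_smul_smul]

lemma sm_pair (g : G) (x y : X) : sm g {x, y} = {g • x, g • y} := by
  ext z
  rw [mem_sm]
  simp only [Finset.mem_insert, Finset.mem_singleton]
  constructor
  · rintro (h | h)
    · left; rw [← h, smul_inv_smul]
    · right; rw [← h, smul_inv_smul]
  · rintro (rfl | rfl)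
    · left; rw [inv_smul_smul]
    · right; rw [inv_smul_smul]

lemma orb_cl_one (x : X) : Orb (cl {x}) = A1 := by
  ext m
  constructor
  · rintro ⟨g, rfl⟩
    rw [act_cl, sm_singleton]
    exact ⟨g • x, rfl⟩
  · rintro ⟨y, rfl⟩
    obtain ⟨g, hg⟩ := MulAction.exists_smul_eq G x y
    exact ⟨g, by rw [act_cl, sm_singleton, hg]⟩

lemma two_trans' (x y u v : X) (hxy : x ≠ y) (huv : u ≠ v) : ∃ g : G, g • x = u ∧ g • y = v := by
  obtain ⟨g₁, hg₁⟩ := MulAction.exists_smul_eq G x u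
  by_cases hcase : g₁ • y = v
  · exact ⟨g₁, hg₁, hcase⟩
  · have hy1 : g₁ • y ≠ u := by
      intro h
      exact hxy (smul_left_cancel g₁ (h.trans hg₁.symm)).symm
    obtain ⟨g₂, hg₂P, hg₂⟩ := two_trans u (g₁ • y) v hy1 huv.symm
    exact ⟨g₂ * g₁, by rw [mul_smul, hg₁, hg₂P], by rw [mul_smul, hg₂]⟩

lemma orb_cl_two (s2 : Finset X) (h2 : s2.card = 2) : Orb (cl s2) = A2 := by
  ext m
  constructor
  · rintro ⟨g, rfl⟩
    rw [act_cl]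
    exact ⟨sm g s2, by rw [card_sm]; exact h2, rfl⟩
  · rintro ⟨t, ht, rfl⟩
    obtain ⟨x, y, hxy, rfl⟩ := Finset.card_eq_two.mp h2
    obtain ⟨u, v, huv, rfl⟩ := Finset.card_eq_two.mp ht
    obtain ⟨g, hgx, hgy⟩ := two_trans' x y u v hxy huv
    exact ⟨g, by rw [act_cl, sm_pair, hgx, hgy]⟩

/-! ### Invariant sets -/

lemma pow_smul_mem {g : G} {s : Finset X} (hinv : sm g s = s) (k : ℕ) {x : X} (hx : x ∈ s) :
    g ^ k • x ∈ s := by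
  induction k with
  | zero => simpa using hx
  | succ k ih =>
    rw [pow_succ', mul_smul]
    have hmem : g • (g ^ k • x) ∈ sm g s := Finset.mem_image_of_mem _ ih
    rwa [hinv] at hmem

lemma invariant_card {g : G} {s : Finset X} (hinv : sm g s = s) {x : X} (hx : x ∈ s)
    (hnf : g • x ≠ x) (hord : Nat.Prime (orderOf g)) : orderOf g ≤ s.card := by
  classical
  set H := Subgroup.zpowers g with hH
  have hsub : (MulAction.orbit H x : Set X) ⊆ ↑s := by
    rintro _ ⟨h, rfl⟩
    obtain ⟨k, hk⟩ := (Submonoid.mem_powers_iff _ _).mp (mem_powers_iff_mem_zpowers.mpr h.2)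
    have : (h : G) • x ∈ s := by rw [← hk]; exact pow_smul_mem hinv k hx
    exact this
  have hmul := orbit_stab (H := H) x
  rw [Nat.card_zpowers] at hmul
  have hdvd : Nat.card (MulAction.orbit H x) ∣ orderOf g := Dvd.intro _ hmul
  have hcases := (Nat.Prime.eq_one_or_self_of_dvd hord _ hdvd)
  rcases hcases with h1 | hp
  · exfalso
    apply hnf
    have hsingle : (MulAction.orbit H x).ncard = 1 := by
      rw [← Nat.card_coe_set_eq, h1]
    obtain ⟨a, ha⟩ := Set.ncard_eq_one.mp hsingle
    have hx1 : x ∈ MulAction.orbit H x := MulAction.mem_orbit_self x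
    have hx2 : g • x ∈ MulAction.orbit H x := by
      have : (⟨g, Subgroup.mem_zpowers g⟩ : H) • x ∈ MulAction.orbit H x := MulAction.mem_orbit x _
      exact this
    rw [ha] at hx1 hx2
    rw [Set.mem_singleton_iff.mp hx2, Set.mem_singleton_iff.mp hx1]
  · calc orderOf g = (MulAction.orbit H x).ncard := by rw [← Nat.card_coe_set_eq, hp]
    _ ≤ (↑s : Set X).ncard := Set.ncard_le_ncard hsub (Set.toFinite _)
    _ = s.card := Set.ncard_coe_finset s

/-! ### Invariant sets for elements of order 3 and 5 -/

lemma inv3_card {g : G} (hg : orderOf g = 3) {s : Finset X} (hinv : sm g s = s)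
    (hne : s ≠ ∅) (hnu : s ≠ Finset.univ) : s.card = 3 := by
  have hle : s.card ≤ 6 := hX6 ▸ Finset.card_le_univ s
  have hprime : Nat.Prime (orderOf g) := by rw [hg]; norm_num
  obtain ⟨x, hx⟩ := Finset.nonempty_iff_ne_empty.mpr hne
  have h1 := invariant_card hinv hx (order3_not_fix hg x) hprime
  rw [hg] at h1
  have hcinv : sm g sᶜ = sᶜ := by rw [sm_compl, hinv]
  have hcne : sᶜ ≠ ∅ := by
    intro h
    exact hnu (by rwa [Finset.compl_eq_empty_iff] at h)
  obtain ⟨y, hy⟩ := Finset.nonempty_iff_ne_empty.mpr hcne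
  have h2 := invariant_card hcinv hy (order3_not_fix hg y) hprime
  rw [hg, Finset.card_compl, hX6] at h2
  omega

lemma inv5 {g : G} (hg : orderOf g = 5) {s : Finset X} (hinv : sm g s = s)
    (hne : s ≠ ∅) (hnu : s ≠ Finset.univ) : ∃ x : X, cl s = cl {x} := by
  obtain ⟨P, hP, huniq⟩ := order5_fix hg
  have hprime : Nat.Prime (orderOf g) := by rw [hg]; norm_num
  have key : ∀ t : Finset X, sm g t = t → t ≠ ∅ → P ∉ t → t = {P}ᶜ := by
    intro t hti htne hPt
    obtain ⟨x, hx⟩ := Finset.nonempty_iff_ne_empty.mpr htne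
    have hxP : g • x ≠ x := fun h => hPt ((huniq x h) ▸ hx)
    have h5 := invariant_card hti hx hxP hprime
    rw [hg] at h5
    have hsub : t ⊆ {P}ᶜ := fun y hy =>
      Finset.mem_compl.mpr (fun hyP => hPt ((Finset.mem_singleton.mp hyP) ▸ hy))
    refine (Finset.eq_of_subset_of_card_le hsub ?_)
    rw [Finset.card_compl, Finset.card_singleton, hX6]
    omega
  by_cases hPs : P ∈ s
  · have hcinv : sm g sᶜ = sᶜ := by rw [sm_compl, hinv]
    have hPc : P ∉ sᶜ := by simp [hPs]
    by_cases hce : sᶜ = ∅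
    · exact absurd (by rwa [Finset.compl_eq_empty_iff] at hce) hnu
    · have hkey := key sᶜ hcinv hce hPc
      refine ⟨P, ?_⟩
      have hs : s = {P} := by
        have h' := congrArg compl hkey
        rwa [compl_compl, compl_compl] at h'
      rw [hs]
  · by_cases hse : s = ∅
    · exact absurd hse hne
    · have hs := key s hinv hse hPs
      exact ⟨P, by rw [hs]; exact cl_compl {P}⟩

lemma SC_eq : {m : M | m ≠ 0 ∧ ∃ g : G, orderOf g = 5 ∧ actM g m = m} = A1 := by
  ext m
  constructor
  · rintro ⟨hm0, g, hg, hfix⟩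
    obtain ⟨s, rfl⟩ := surj m
    have hinv : sm g s = s := fix_cl_iff.mp hfix
    have hne : s ≠ ∅ := fun h => hm0 (cl_zero_iff.mpr (Or.inl h))
    have hnu : s ≠ Finset.univ := fun h => hm0 (cl_zero_iff.mpr (Or.inr h))
    obtain ⟨x, hx⟩ := inv5 hg hinv hne hnu
    exact ⟨x, hx⟩
  · rintro ⟨x, rfl⟩
    constructor
    · rw [Ne, cl_zero_iff]
      rintro (h | h)
      · have := congrArg Finset.card h
        simp at this
      · have := congrArg Finset.card h
        rw [Finset.card_singleton, Finset.card_univ, hX6] at this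
        norm_num at this
    · have h5 : (5:ℕ) ∣ Nat.card (x : Subgroup G) := by rw [cardP]
      obtain ⟨k, hk⟩ := exists_prime_orderOf_dvd_card' 5 h5
      refine ⟨(k : G), (orderOf_injective (x : Subgroup G).subtype Subtype.coe_injective k).trans hk, ?_⟩
      apply fix_cl_iff.mpr
      rw [sm_singleton]
      have hxx : (k : G) • x = x :=
        Sylow.smul_eq_iff_mem_normalizer.mpr (Subgroup.le_normalizer k.2)
      rw [hxx]

/-! ### The orbit of 3-element classes -/

lemma stab_card_le (s3 : Finset X) (h3 : s3.card = 3) :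
    Nat.card (MulAction.stabilizer G (cl s3)) ≤ 6 := by
  classical
  have hF : ∀ g : MulAction.stabilizer G (cl s3), sm (g : G) s3 = s3 := by
    intro g
    exact fix_cl_iff.mp g.2
  set F : MulAction.stabilizer G (cl s3) → (↥s3 ↪ ↥s3) := fun g =>
    ⟨fun x => ⟨(g : G) • (x : X), by
        have := Finset.mem_image_of_mem (fun y => (g : G) • y) x.2
        rwa [show s3.image (fun y => (g : G) • y) = sm (g : G) s3 from rfl, hF g] at this⟩,
     fun x y hxy => by
       apply Subtype.ext
       have h' := congrArg Subtype.val hxy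
       exact smul_left_cancel _ h'⟩ with hFdef
  have hFinj : Function.Injective F := by
    intro g g' h
    have hagree : ∀ x ∈ s3, (g : G) • x = (g' : G) • x := by
      intro x hx
      have h' := congrArg (fun f => ((f ⟨x, hx⟩ : ↥s3) : X)) h
      exact h'
    have hone : ((g' : G)⁻¹ * (g : G)) = 1 := by
      apply eq_one_of_fixes _ s3 (by omega)
      intro x hx
      rw [mul_smul, hagree x hx, inv_smul_smul]
    exact Subtype.ext (inv_mul_eq_one.mp hone).symm
  have hle := Nat.card_le_card_of_injective F hFinj
  rw [Nat.card_eq_fintype_card (α := ↥s3 ↪ ↥s3), Fintype.card_embedding_eq,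
    Fintype.card_coe, h3] at hle
  simpa using hle

lemma cardA3 : A3.ncard = 10 := by
  classical
  set T3 : Finset (Finset X) := Finset.univ.filter (fun s : Finset X => s.card = 3) with hT3
  have hT3card : T3.card = 20 := by
    have h := Fintype.card_finset_len (α := X) 3
    rw [hX6, Fintype.card_subtype] at h
    rw [hT3, h]
    decide
  have hfiber : ∀ s ∈ T3, T3.filter (fun t => cl t = cl s) = {s, sᶜ} := by
    intro s hs
    have hs3 : s.card = 3 := (Finset.mem_filter.mp hs).2
    ext t
    simp only [Finset.mem_filter, Finset.mem_insert, Finset.mem_singleton]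
    constructor
    · rintro ⟨_, heq⟩
      exact cl_eq_cl_iff.mp heq
    · rintro (rfl | rfl)
      · exact ⟨hs, rfl⟩
      · refine ⟨?_, cl_compl s⟩
        rw [hT3, Finset.mem_filter]
        refine ⟨Finset.mem_univ _, ?_⟩
        rw [Finset.card_compl, hX6, hs3]
  have hA3 : A3 = ↑(T3.image cl) := by
    ext m
    simp only [A3, Set.mem_setOf_eq, Finset.coe_image, Set.mem_image, Finset.mem_coe, hT3,
      Finset.mem_filter, Finset.mem_univ, true_and]
    constructor
    · rintro ⟨s, h1, rfl⟩; exact ⟨s, h1, rfl⟩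
    · rintro ⟨s, h1, rfl⟩; exact ⟨s, h1, rfl⟩
  have hsne : ∀ s : Finset X, s ∈ T3 → s ≠ sᶜ := by
    intro s hs heq
    have hs3 : s.card = 3 := (Finset.mem_filter.mp hs).2
    obtain ⟨x, hx⟩ := Finset.card_pos.mp (by omega : 0 < s.card)
    have : x ∈ sᶜ := heq ▸ hx
    exact (Finset.mem_compl.mp this) hx
  have hcard2 : T3.card = (T3.image cl).card * 2 := by
    rw [Finset.card_eq_sum_card_fiberwise
      (f := cl) (t := T3.image cl) (fun x hx => Finset.mem_image_of_mem _ hx)]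
    have hconst : ∀ m ∈ T3.image cl, (T3.filter (fun t => cl t = m)).card = 2 := by
      intro m hm
      obtain ⟨s, hs, rfl⟩ := Finset.mem_image.mp hm
      rw [hfiber s hs]
      exact Finset.card_pair (hsne s hs)
    rw [Finset.sum_congr rfl hconst, Finset.sum_const, smul_eq_mul, mul_comm]
  rw [hA3, Set.ncard_coe_finset]
  omega

lemma orbA3 (s3 : Finset X) (h3 : s3.card = 3) : Orb (cl s3) = A3 := by
  have hsub : Orb (cl s3) ⊆ A3 := by
    rintro m ⟨g, rfl⟩
    rw [act_cl]
    exact ⟨sm g s3, by rw [card_sm, h3], rfl⟩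
  have horb := orbit_stab (H := G) (cl s3)
  rw [cardG] at horb
  have hstab := stab_card_le s3 h3
  haveI : Nonempty ↥(MulAction.stabilizer G (cl s3)) := ⟨1⟩
  have hpos : 0 < Nat.card (MulAction.stabilizer G (cl s3)) := Nat.card_pos
  have h10 : 10 ≤ Nat.card (MulAction.orbit G (cl s3)) := by
    by_contra hlt
    push_neg at hlt
    have hle : Nat.card (MulAction.orbit G (cl s3)) * Nat.card (MulAction.stabilizer G (cl s3)) ≤ 9 * 6 :=
      Nat.mul_le_mul (by omega) hstab
    omega
  have hOrb : Orb (cl s3) = MulAction.orbit G (cl s3) := Orb_eq_orbit _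
  rw [hOrb]
  rw [hOrb] at hsub
  apply Set.eq_of_subset_of_ncard_le hsub ?_ (Set.toFinite _)
  rw [cardA3]
  rw [← Nat.card_coe_set_eq]
  omega

lemma SB_eq : {m : M | m ≠ 0 ∧ ∃ g : G, orderOf g = 3 ∧ actM g m = m} = A3 := by
  ext m
  constructor
  · rintro ⟨hm0, g, hg, hfix⟩
    obtain ⟨s, rfl⟩ := surj m
    have hinv := fix_cl_iff.mp hfix
    have hne : s ≠ ∅ := fun h => hm0 (cl_zero_iff.mpr (Or.inl h))
    have hnu : s ≠ Finset.univ := fun h => hm0 (cl_zero_iff.mpr (Or.inr h))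
    exact ⟨s, inv3_card hg hinv hne hnu, rfl⟩
  · intro hm
    obtain ⟨g₀, hg₀⟩ := exists_prime_orderOf_dvd_card' 3 (by rw [cardG]; norm_num)
    obtain ⟨x⟩ : Nonempty X := inferInstance
    have h1 : g₀ • x ≠ x := order3_not_fix hg₀ x
    have hg₀2 : orderOf (g₀ * g₀) = 3 := by
      rw [show g₀ * g₀ = g₀ ^ 2 from (sq g₀).symm, orderOf_pow, hg₀]
      decide
    have h2 : g₀ • g₀ • x ≠ g₀ • x := fun h => h1 (smul_left_cancel g₀ h)
    have h3' : g₀ • g₀ • x ≠ x := by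
      intro h
      exact order3_not_fix hg₀2 x (by rw [mul_smul]; exact h)
    set T : Finset X := {x, g₀ • x, g₀ • g₀ • x} with hT
    have hTcard : T.card = 3 :=
      Finset.card_eq_three.mpr ⟨x, g₀ • x, g₀ • g₀ • x, h1.symm, h3'.symm, h2.symm, hT⟩
    have hcube : g₀ • g₀ • g₀ • x = x := by
      have hc : (g₀ * (g₀ * g₀)) • x = x := by
        rw [show g₀ * (g₀ * g₀) = g₀ ^ 3 from (pow_three g₀).symm, ← hg₀, pow_orderOf_eq_one, one_smul]
      rw [mul_smul, mul_smul] at hc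
      exact hc
    have hTinv : sm g₀ T = T := by
      show Finset.image (fun y => g₀ • y) {x, g₀ • x, g₀ • g₀ • x} = T
      rw [Finset.image_insert, Finset.image_insert, Finset.image_singleton]
      rw [hcube, hT]
      ext y
      simp only [Finset.mem_insert, Finset.mem_singleton]
      tauto
    have hT0 : cl T ≠ 0 := by
      rw [Ne, cl_zero_iff]
      rintro (h | h)
      · rw [h] at hTcard; simp at hTcard
      · rw [h, Finset.card_univ, hX6] at hTcard; norm_num at hTcard
    have hmT : m ∈ Orb (cl T) := by rw [orbA3 T hTcard]; exact hm
    obtain ⟨h, rfl⟩ := hmT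
    refine ⟨smul_ne_zero_M h hT0, h * g₀ * h⁻¹, ?_, ?_⟩
    · have := orderOf_injective ((MulAut.conj h) : G ≃* G).toMonoidHom (MulEquiv.injective _) g₀
      rw [hg₀] at this
      rw [← this]
      rfl
    · show (h * g₀ * h⁻¹) • (h • (cl T)) = h • (cl T)
      rw [smul_smul, show h * g₀ * h⁻¹ * h = h * g₀ by group, mul_smul]
      congr 1
      exact fix_cl_iff.mpr hTinv

/-! ### Cardinalities and characterizations -/

lemma cl_ne_zero {s : Finset X} (h1 : s.card ≠ 0) (h2 : s.card ≠ 6) : cl s ≠ 0 := by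
  rw [Ne, cl_zero_iff]
  rintro (h | h)
  · rw [h] at h1; simp at h1
  · rw [h, Finset.card_univ, hX6] at h2; exact h2 rfl

lemma card_of_cl_eq {s t : Finset X} (h : cl s = cl t) :
    t.card = s.card ∨ t.card = 6 - s.card := by
  rcases cl_eq_cl_iff.mp h with h1 | h1
  · left; rw [h1]
  · right
    have ht : t = sᶜ := by rw [h1, compl_compl]
    rw [ht, Finset.card_compl, hX6]

lemma cardA1 : A1.ncard = 6 := by
  have h : A1 = (fun x : X => cl {x}) '' Set.univ := by
    ext m
    constructor
    · rintro ⟨x, rfl⟩; exact ⟨x, trivial, rfl⟩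
    · rintro ⟨x, -, rfl⟩; exact ⟨x, rfl⟩
  rw [h, Set.ncard_image_of_injective _ ?inj, Set.ncard_univ, cardX]
  case inj =>
    intro x y hxy
    rcases cl_eq_cl_iff.mp hxy with h1 | h1
    · exact Finset.singleton_injective h1
    · exfalso
      have := congrArg Finset.card h1
      rw [Finset.card_singleton, Finset.card_compl, Finset.card_singleton, hX6] at this
      norm_num at this

lemma cardA2 : A2.ncard = 15 := by
  classical
  have h : A2 = cl '' {s : Finset X | s.card = 2} := by
    ext m
    constructor
    · rintro ⟨s, hs, rfl⟩; exact ⟨s, hs, rfl⟩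
    · rintro ⟨s, hs, rfl⟩; exact ⟨s, hs, rfl⟩
  rw [h, Set.ncard_image_of_injOn ?inj]
  · rw [← Nat.card_coe_set_eq, Nat.card_eq_fintype_card]
    have h2 := Fintype.card_finset_len (α := X) 2
    rw [hX6] at h2
    rw [show Nat.choose 6 2 = 15 from by decide] at h2
    exact h2
  case inj =>
    intro s hs t ht heq
    rcases cl_eq_cl_iff.mp heq with h1 | h1
    · exact h1
    · exfalso
      have hs2 : s.card = 2 := hs
      have ht2 : t.card = 2 := ht
      rw [h1, Finset.card_compl, hX6, ht2] at hs2
      norm_num at hs2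

lemma A2_eq : A2 = {m : M | m ≠ 0 ∧ m ∈ V} := by
  ext m
  constructor
  · rintro ⟨s, hs, rfl⟩
    refine ⟨cl_ne_zero (by rw [hs]; norm_num) (by rw [hs]; norm_num),
      (mem_V_iff s).mpr (by rw [hs]; decide)⟩
  · rintro ⟨hm0, hmV⟩
    obtain ⟨s, rfl⟩ := surj m
    have heven := (mem_V_iff s).mp hmV
    have hne : s ≠ ∅ := fun h => hm0 (cl_zero_iff.mpr (Or.inl h))
    have hnu : s ≠ Finset.univ := fun h => hm0 (cl_zero_iff.mpr (Or.inr h))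
    have hle : s.card ≤ 6 := hX6 ▸ Finset.card_le_univ s
    have h0 : s.card ≠ 0 := fun h => hne (Finset.card_eq_zero.mp h)
    have h6 : s.card ≠ 6 := fun h => hnu ((Finset.card_eq_iff_eq_univ s).mp (by rw [h, hX6]))
    rw [Nat.even_iff] at heven
    have h24 : s.card = 2 ∨ s.card = 4 := by omega
    rcases h24 with h | h
    · exact ⟨s, h, rfl⟩
    · refine ⟨sᶜ, ?_, (cl_compl s).symm⟩
      rw [Finset.card_compl, hX6, h]

lemma union_eq : {m : M | m ≠ 0} = A2 ∪ A3 ∪ A1 := by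
  ext m
  simp only [Set.mem_setOf_eq, Set.mem_union]
  constructor
  · intro hm0
    obtain ⟨s, rfl⟩ := surj m
    have hne : s ≠ ∅ := fun h => hm0 (cl_zero_iff.mpr (Or.inl h))
    have hnu : s ≠ Finset.univ := fun h => hm0 (cl_zero_iff.mpr (Or.inr h))
    have hle : s.card ≤ 6 := hX6 ▸ Finset.card_le_univ s
    have h0 : s.card ≠ 0 := fun h => hne (Finset.card_eq_zero.mp h)
    have h6 : s.card ≠ 6 := fun h => hnu ((Finset.card_eq_iff_eq_univ s).mp (by rw [h, hX6]))
    have hccard : sᶜ.card = 6 - s.card := by rw [Finset.card_compl, hX6]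
    have hc : s.card = 1 ∨ s.card = 2 ∨ s.card = 3 ∨ s.card = 4 ∨ s.card = 5 := by omega
    rcases hc with h | h | h | h | h
    · obtain ⟨x, hx⟩ := Finset.card_eq_one.mp h
      right; exact ⟨x, by rw [hx]⟩
    · left; left; exact ⟨s, h, rfl⟩
    · left; right; exact ⟨s, h, rfl⟩
    · left; left; exact ⟨sᶜ, by omega, (cl_compl s).symm⟩
    · right
      obtain ⟨x, hx⟩ := Finset.card_eq_one.mp (show sᶜ.card = 1 by omega)
      exact ⟨x, by rw [← cl_compl s, hx]⟩
  · rintro ((⟨s, hs, rfl⟩ | ⟨s, hs, rfl⟩) | ⟨x, rfl⟩)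
    · exact cl_ne_zero (by rw [hs]; norm_num) (by rw [hs]; norm_num)
    · exact cl_ne_zero (by rw [hs]; norm_num) (by rw [hs]; norm_num)
    · exact cl_ne_zero (by rw [Finset.card_singleton]; norm_num)
        (by rw [Finset.card_singleton]; norm_num)

lemma disj23 : A2 ∩ A3 = ∅ := by
  ext m
  simp only [Set.mem_inter_iff, Set.mem_empty_iff_false, iff_false, not_and]
  rintro ⟨s, hs, rfl⟩ ⟨t, ht, hm⟩
  rcases card_of_cl_eq hm with h | h <;> omega

lemma disj21 : A2 ∩ A1 = ∅ := by
  ext m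
  simp only [Set.mem_inter_iff, Set.mem_empty_iff_false, iff_false, not_and]
  rintro ⟨s, hs, rfl⟩ ⟨x, hm⟩
  have h1 : ({x} : Finset X).card = 1 := Finset.card_singleton x
  rcases card_of_cl_eq hm with h | h <;> omega

lemma disj31 : A3 ∩ A1 = ∅ := by
  ext m
  simp only [Set.mem_inter_iff, Set.mem_empty_iff_false, iff_false, not_and]
  rintro ⟨s, hs, rfl⟩ ⟨x, hm⟩
  have h1 : ({x} : Finset X).card = 1 := Finset.card_singleton x
  rcases card_of_cl_eq hm with h | h <;> omega

lemma exists_rep (k : ℕ) (hk : k ≤ 6) : ∃ s : Finset X, s.card = k := by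
  obtain ⟨t, -, ht⟩ := Finset.exists_subset_card_eq (s := (Finset.univ : Finset X)) (n := k)
    (by rw [Finset.card_univ, hX6]; exact hk)
  exact ⟨t, ht⟩

/-- `A₅` acting on the nonzero elements of `M = 𝔽₂^X/⟨𝟙⟩` (where `X` is its set of six
Sylow 5-subgroups) has exactly three orbits, of cardinalities 15, 10 and 6; they are,
respectively: the nonzero elements of `V` (the image of the augmentation kernel); the
nonzero elements fixed by some element of order 3; and the nonzero elements fixed by some
element of order 5. -/
theorem three_orbits_on_M :
    ∃ a b c : M,
      a ≠ 0 ∧ b ≠ 0 ∧ c ≠ 0 ∧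
      {m : M | m ≠ 0} = Orb a ∪ Orb b ∪ Orb c ∧
      Orb a ∩ Orb b = ∅ ∧ Orb a ∩ Orb c = ∅ ∧ Orb b ∩ Orb c = ∅ ∧
      Set.ncard (Orb a) = 15 ∧ Set.ncard (Orb b) = 10 ∧ Set.ncard (Orb c) = 6 ∧
      Orb a = {m : M | m ≠ 0 ∧ m ∈ V} ∧
      Orb b = {m : M | m ≠ 0 ∧ ∃ g : G, orderOf g = 3 ∧ actM g m = m} ∧
      Orb c = {m : M | m ≠ 0 ∧ ∃ g : G, orderOf g = 5 ∧ actM g m = m} := by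
  obtain ⟨s2, hs2⟩ := exists_rep 2 (by norm_num)
  obtain ⟨s3, hs3⟩ := exists_rep 3 (by norm_num)
  obtain ⟨x0⟩ : Nonempty X := inferInstance
  refine ⟨cl s2, cl s3, cl {x0}, ?_, ?_, ?_, ?_, ?_, ?_, ?_, ?_, ?_, ?_, ?_, ?_, ?_⟩
  · exact cl_ne_zero (by rw [hs2]; norm_num) (by rw [hs2]; norm_num)
  · exact cl_ne_zero (by rw [hs3]; norm_num) (by rw [hs3]; norm_num)
  · exact cl_ne_zero (by rw [Finset.card_singleton]; norm_num)
      (by rw [Finset.card_singleton]; norm_num)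
  · rw [orb_cl_two s2 hs2, orbA3 s3 hs3, orb_cl_one x0]; exact union_eq
  · rw [orb_cl_two s2 hs2, orbA3 s3 hs3]; exact disj23
  · rw [orb_cl_two s2 hs2, orb_cl_one x0]; exact disj21
  · rw [orbA3 s3 hs3, orb_cl_one x0]; exact disj31
  · rw [orb_cl_two s2 hs2]; exact cardA2
  · rw [orbA3 s3 hs3]; exact cardA3
  · rw [orb_cl_one x0]; exact cardA1
  · rw [orb_cl_two s2 hs2]; exact A2_eq
  · rw [orbA3 s3 hs3]; exact SB_eq.symm
  · rw [orb_cl_one x0]; exact SC_eq.symm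

end Stmt12
end

section
/- Let σ be the 5-cycle (0 1 2 3 4) in the alternating group A₅ on {0,1,2,3,4}, let C₅⁺ be the conjugacy class of σ in A₅ and C₅⁻ the conjugacy class of σ² in A₅. Let T be the set of triples (g₁, g₂, g₃) ∈ A₅³ such that g₁g₂g₃ = 1, g₁ ∈ C₅⁺, g₂ ∈ C₅⁻, g₃ has order 3, and g₁, g₂, g₃ generate A₅. Then T is nonempty and A₅ acts transitively on T by simultaneous conjugation: for any two triples in T there is h ∈ A₅ conjugating one to the other entrywise. (Equivalently, the inner Nielsen class ni(A₅, (C₅⁺, C₅⁻, C₃)) has exactly one element.) -/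
set_option maxRecDepth 1000000

namespace Stmt13

/-- `A₅`, the alternating group on `{0, 1, 2, 3, 4}`. -/
abbrev A5 : Type := ↥(alternatingGroup (Fin 5))

/-- The 5-cycle `σ = (0 1 2 3 4)`. -/
def σ : Equiv.Perm (Fin 5) := finRotate 5

lemma σ_mem : σ ∈ alternatingGroup (Fin 5) := by
  rw [Equiv.Perm.mem_alternatingGroup]
  show Equiv.Perm.sign (finRotate (4 + 1)) = 1
  rw [sign_finRotate]; decide

/-- `σ` as an element of `A₅`. -/
def s : A5 := ⟨σ, σ_mem⟩

/-- The set of triples `(g₁, g₂, g₃)` with `g₁g₂g₃ = 1`, `g₁ ∈ C₅⁺` (the `A₅`-conjugacy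
class of `σ`), `g₂ ∈ C₅⁻` (the class of `σ²`), `g₃` of order 3, generating `A₅`. -/
def T : Set (A5 × A5 × A5) :=
  {p | p.1 * p.2.1 * p.2.2 = 1 ∧ IsConj s p.1 ∧ IsConj (s * s) p.2.1 ∧
    orderOf p.2.2 = 3 ∧ Subgroup.closure {p.1, p.2.1, p.2.2} = ⊤}

/-! ### Auxiliary machinery -/

/-- Product of a list of transpositions. -/
def wrd (l : List (Fin 5 × Fin 5)) : Equiv.Perm (Fin 5) :=
  (l.map fun q => Equiv.swap q.1 q.2).prod

/-- Words (as transposition lists) for all 60 even permutations of `Fin 5`. -/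
def evensW : List (List (Fin 5 × Fin 5)) := [
[],
  [(2,3),(3,4)],
  [(2,4),(3,4)],
  [(1,2),(3,4)],
  [(1,2),(2,3)],
  [(1,2),(2,4)],
  [(1,3),(2,3)],
  [(1,3),(3,4)],
  [(1,3),(2,4)],
  [(1,4),(2,4)],
  [(1,4),(3,4)],
  [(1,4),(2,3)],
  [(0,1),(3,4)],
  [(0,1),(2,3)],
  [(0,1),(2,4)],
  [(0,1),(1,2)],
  [(0,1),(1,2),(2,3),(3,4)],
  [(0,1),(1,2),(2,4),(3,4)],
  [(0,1),(1,3),(2,3),(3,4)],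
  [(0,1),(1,3)],
  [(0,1),(1,3),(2,4),(3,4)],
  [(0,1),(1,4),(2,4),(3,4)],
  [(0,1),(1,4)],
  [(0,1),(1,4),(2,3),(3,4)],
  [(0,2),(1,2)],
  [(0,2),(1,2),(2,3),(3,4)],
  [(0,2),(1,2),(2,4),(3,4)],
  [(0,2),(3,4)],
  [(0,2),(2,3)],
  [(0,2),(2,4)],
  [(0,2),(1,3)],
  [(0,2),(1,3),(2,3),(3,4)],
  [(0,2),(1,3),(2,4),(3,4)],
  [(0,2),(1,4)],
  [(0,2),(1,4),(2,4),(3,4)],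
  [(0,2),(1,4),(2,3),(3,4)],
  [(0,3),(1,3),(2,3),(3,4)],
  [(0,3),(1,3)],
  [(0,3),(1,3),(2,4),(3,4)],
  [(0,3),(2,3)],
  [(0,3),(3,4)],
  [(0,3),(2,4)],
  [(0,3),(1,2),(2,3),(3,4)],
  [(0,3),(1,2)],
  [(0,3),(1,2),(2,4),(3,4)],
  [(0,3),(1,4),(2,3),(3,4)],
  [(0,3),(1,4),(2,4),(3,4)],
  [(0,3),(1,4)],
  [(0,4),(1,4),(2,4),(3,4)],
  [(0,4),(1,4)],
  [(0,4),(1,4),(2,3),(3,4)],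
  [(0,4),(2,4)],
  [(0,4),(3,4)],
  [(0,4),(2,3)],
  [(0,4),(1,2),(2,4),(3,4)],
  [(0,4),(1,2)],
  [(0,4),(1,2),(2,3),(3,4)],
  [(0,4),(1,3),(2,4),(3,4)],
  [(0,4),(1,3),(2,3),(3,4)],
  [(0,4),(1,3)]]

/-- The list of all 60 even permutations of `Fin 5`. -/
def evens : List (Equiv.Perm (Fin 5)) := evensW.map wrd

def σw : Equiv.Perm (Fin 5) := wrd [(0,1),(1,2),(2,3),(3,4)]
def βp : Equiv.Perm (Fin 5) := wrd [(0,3),(1,4),(2,4),(3,4)]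

def C5pW : List (List (Fin 5 × Fin 5)) := [
[(0,1),(1,2),(2,3),(3,4)],
  [(0,1),(1,3),(2,3),(3,4)],
  [(0,1),(1,4),(2,3),(3,4)],
  [(0,2),(1,2),(2,4),(3,4)],
  [(0,2),(1,4),(2,4),(3,4)],
  [(0,2),(1,4),(2,3),(3,4)],
  [(0,3),(1,3),(2,4),(3,4)],
  [(0,3),(1,2),(2,3),(3,4)],
  [(0,3),(1,2),(2,4),(3,4)],
  [(0,4),(1,4),(2,4),(3,4)],
  [(0,4),(1,3),(2,4),(3,4)],
  [(0,4),(1,3),(2,3),(3,4)]]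

def C5mW : List (List (Fin 5 × Fin 5)) := [
[(0,1),(1,2),(2,4),(3,4)],
  [(0,1),(1,3),(2,4),(3,4)],
  [(0,1),(1,4),(2,4),(3,4)],
  [(0,2),(1,2),(2,3),(3,4)],
  [(0,2),(1,3),(2,3),(3,4)],
  [(0,2),(1,3),(2,4),(3,4)],
  [(0,3),(1,3),(2,3),(3,4)],
  [(0,3),(1,4),(2,3),(3,4)],
  [(0,3),(1,4),(2,4),(3,4)],
  [(0,4),(1,4),(2,3),(3,4)],
  [(0,4),(1,2),(2,4),(3,4)],
  [(0,4),(1,2),(2,3),(3,4)]]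

def C5pl : List (Equiv.Perm (Fin 5)) := C5pW.map wrd
def C5ml : List (Equiv.Perm (Fin 5)) := C5mW.map wrd

/-! ### Kernel computations -/

lemma hσw : σ = σw := by decide

lemma dnodup : evens.Nodup := by decide

lemma dconj1 : ∀ c ∈ evens, c * σw * c⁻¹ ∈ C5pl := by decide

lemma dconj2 : ∀ c ∈ evens, c * (σw * σw) * c⁻¹ ∈ C5ml := by decide

lemma dcore : ∀ g1 ∈ C5pl, ∀ g2 ∈ C5ml, ((g1 * g2) ^ 3 = 1 ∧ g1 * g2 ≠ 1) →
    ∃ h ∈ evens, h * σw * h⁻¹ = g1 ∧ h * βp * h⁻¹ = g2 := by decide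

lemma dwordsEven : ∀ l ∈ evensW, (∀ q ∈ l, q.1 ≠ q.2) ∧ l.length % 2 = 0 := by decide

lemma dbase1 : wrd [(2,3),(3,4)] * (σw * σw) * (wrd [(2,3),(3,4)])⁻¹ = βp := by decide

lemma dbase2 : ((σw * βp)⁻¹) ^ 3 = 1 ∧ (σw * βp)⁻¹ ≠ 1 := by decide

lemma dσ5 : σw ^ 5 = 1 ∧ σw ≠ 1 := by decide

lemma dβmem : βp ∈ evens := by decide

lemma dbcmem : wrd [(2,3),(3,4)] ∈ evens := by decide

/-! ### Membership of `evens` in the alternating group -/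

lemma sign_wrd (l : List (Fin 5 × Fin 5)) (h : ∀ q ∈ l, q.1 ≠ q.2) :
    Equiv.Perm.sign (wrd l) = (-1) ^ l.length := by
  induction l with
  | nil => simp [wrd]
  | cons a t ih =>
    have : wrd (a :: t) = Equiv.swap a.1 a.2 * wrd t := by
      simp [wrd]
    rw [this, map_mul, Equiv.Perm.sign_swap (h a List.mem_cons_self),
      ih (fun q hq => h q (List.mem_cons_of_mem a hq)), List.length_cons, pow_succ,
      mul_comm]

lemma mem_of_mem_evens : ∀ p ∈ evens, p ∈ alternatingGroup (Fin 5) := by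
  intro p hp
  obtain ⟨l, hl, rfl⟩ := List.mem_map.mp hp
  obtain ⟨hne, hlen⟩ := dwordsEven l hl
  rw [Equiv.Perm.mem_alternatingGroup, sign_wrd l hne]
  exact Even.neg_one_pow (Nat.even_iff.mpr hlen)

/-- `A₅` has 60 elements. -/
lemma cardA5 : Nat.card A5 = 60 := by
  have h2 : 2 * Fintype.card (alternatingGroup (Fin 5)) = Fintype.card (Equiv.Perm (Fin 5)) :=
    two_mul_card_alternatingGroup
  rw [Fintype.card_perm, Fintype.card_fin] at h2
  rw [← Nat.card_eq_fintype_card] at h2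
  have h120 : Nat.factorial 5 = 120 := rfl
  rw [h120] at h2
  show Nat.card ↥(alternatingGroup (Fin 5)) = 60
  omega

/-- Every element of `A₅` is in the list `evens`. -/
lemma complete : ∀ g : Equiv.Perm (Fin 5), g ∈ alternatingGroup (Fin 5) → g ∈ evens := by
  classical
  have hEcard : evens.toFinset.card = 60 := by
    rw [List.toFinset_card_of_nodup dnodup]; rfl
  have hFcard : (alternatingGroup (Fin 5) : Set (Equiv.Perm (Fin 5))).toFinset.card = 60 := by
    rw [Set.toFinset_card, ← Nat.card_eq_fintype_card]
    exact cardA5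
  have hsub : evens.toFinset ⊆ (alternatingGroup (Fin 5) : Set (Equiv.Perm (Fin 5))).toFinset := by
    intro p hp
    rw [Set.mem_toFinset]
    exact mem_of_mem_evens p (List.mem_toFinset.mp hp)
  have heq := Finset.eq_of_subset_of_card_le hsub (le_of_eq (hFcard.trans hEcard.symm))
  intro g hg
  have : g ∈ evens.toFinset := by
    rw [heq, Set.mem_toFinset]; exact hg
  exact List.mem_toFinset.mp this

/-- Lift an element of `evens` to `A5`. -/
def lift (p : Equiv.Perm (Fin 5)) (h : p ∈ evens) : A5 := ⟨p, mem_of_mem_evens p h⟩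

/-- A subgroup of `A₅` containing elements of order 5 and of order 3 is everything. -/
lemma genTop (H : Subgroup A5) (x y : A5) (hx : x ∈ H) (hy : y ∈ H)
    (hx5 : orderOf x = 5) (hy3 : orderOf y = 3) : H = ⊤ := by
  classical
  by_contra hne
  haveI : Fintype (A5 ⧸ H) := Fintype.ofFinite _
  have h5 : (5 : ℕ) ∣ Nat.card H := by
    have := Subgroup.orderOf_dvd_natCard H hx
    rwa [hx5] at this
  have h3 : (3 : ℕ) ∣ Nat.card H := by
    have := Subgroup.orderOf_dvd_natCard H hy
    rwa [hy3] at this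
  have h15 : (15 : ℕ) ∣ Nat.card H :=
    (Nat.Coprime.mul_dvd_of_dvd_of_dvd (by norm_num) h3 h5 : (3 * 5 : ℕ) ∣ _)
  have hmul : Nat.card H * H.index = 60 := by
    rw [Subgroup.card_mul_index]; exact cardA5
  obtain ⟨k, hk⟩ := h15
  have hk4 : k * H.index = 4 := by
    have : 15 * (k * H.index) = 15 * 4 := by rw [← mul_assoc, ← hk, hmul]
    omega
  have hidx : H.index ≤ 4 := Nat.le_of_dvd (by norm_num) (Dvd.intro_left k hk4)
  have hcore : H.normalCore = ⊥ := by
    rcases (Subgroup.normalCore_normal H).eq_bot_or_eq_top with h | h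
    · exact h
    · exact absurd (top_le_iff.mp (h ▸ Subgroup.normalCore_le H)) hne
  have hinj : Function.Injective (MulAction.toPermHom A5 (A5 ⧸ H)) := by
    rw [← MonoidHom.ker_eq_bot_iff, ← Subgroup.normalCore_eq_ker, hcore]
  have hle : (60 : ℕ) ≤ Nat.card (Equiv.Perm (A5 ⧸ H)) :=
    cardA5 ▸ Nat.card_le_card_of_injective _ hinj
  have hcards : Nat.card (Equiv.Perm (A5 ⧸ H)) = Nat.factorial (H.index) := by
    rw [Nat.card_eq_fintype_card, Fintype.card_perm]
    congr 1
    rw [← Nat.card_eq_fintype_card, ← Subgroup.index_eq_card]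
  have hfac : Nat.factorial (H.index) ≤ 24 :=
    le_trans (Nat.factorial_le hidx) (by norm_num [Nat.factorial])
  omega

/-- The base second entry. -/
def b2 : A5 := lift βp dβmem

/-- The base third entry. -/
def b3 : A5 := (s * b2)⁻¹

lemma sval : (s : Equiv.Perm (Fin 5)) = σw := hσw

lemma b3_pow : b3 ^ 3 = 1 ∧ b3 ≠ 1 := by
  constructor
  · apply Subtype.ext
    have : ((b3 ^ 3 : A5) : Equiv.Perm (Fin 5)) = ((σw * βp)⁻¹) ^ 3 := by
      push_cast [b3, b2, lift, s, hσw]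
      rfl
    rw [this, dbase2.1]; rfl
  · intro h
    apply dbase2.2
    have : ((b3 : A5) : Equiv.Perm (Fin 5)) = (σw * βp)⁻¹ := by
      push_cast [b3, b2, lift, s, hσw]
      rfl
    rw [← this, h]; rfl

lemma orderOf_b3 : orderOf b3 = 3 :=
  haveI : Fact (Nat.Prime 3) := ⟨by norm_num⟩
  orderOf_eq_prime b3_pow.1 b3_pow.2

lemma orderOf_s : orderOf s = 5 := by
  haveI : Fact (Nat.Prime 5) := ⟨by norm_num⟩
  apply orderOf_eq_prime
  · apply Subtype.ext
    have : ((s ^ 5 : A5) : Equiv.Perm (Fin 5)) = σw ^ 5 := by push_cast [sval]; rfl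
    rw [this, dσ5.1]; rfl
  · intro h
    apply dσ5.2
    rw [← sval, h]; rfl

/-- Any triple in `T` is conjugate to the base triple. -/
lemma reach : ∀ p ∈ T, ∃ h : A5,
    h * s * h⁻¹ = p.1 ∧ h * b2 * h⁻¹ = p.2.1 ∧ h * b3 * h⁻¹ = p.2.2 := by
  rintro ⟨g1, g2, g3⟩ ⟨hprod, hc1, hc2, hord, -⟩
  dsimp only at hprod hc1 hc2 hord ⊢
  obtain ⟨c, hc⟩ := isConj_iff.mp hc1
  obtain ⟨d, hd⟩ := isConj_iff.mp hc2
  have hg3 : g3 = (g1 * g2)⁻¹ := (mul_eq_one_iff_inv_eq.mp hprod).symm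
  -- conditions at the permutation level
  have hg1v : (g1 : Equiv.Perm (Fin 5)) = (c : Equiv.Perm (Fin 5)) * σw * (c : Equiv.Perm (Fin 5))⁻¹ := by
    rw [← hc]; push_cast [sval]; rfl
  have hg2v : (g2 : Equiv.Perm (Fin 5)) = (d : Equiv.Perm (Fin 5)) * (σw * σw) * (d : Equiv.Perm (Fin 5))⁻¹ := by
    rw [← hd]; push_cast [sval]; rfl
  have hcmem : (c : Equiv.Perm (Fin 5)) ∈ evens := complete _ c.2
  have hdmem : (d : Equiv.Perm (Fin 5)) ∈ evens := complete _ d.2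
  have hmem1 : (g1 : Equiv.Perm (Fin 5)) ∈ C5pl := hg1v ▸ dconj1 _ hcmem
  have hmem2 : (g2 : Equiv.Perm (Fin 5)) ∈ C5ml := hg2v ▸ dconj2 _ hdmem
  have hcube : ((g1 : Equiv.Perm (Fin 5)) * g2) ^ 3 = 1 ∧
      (g1 : Equiv.Perm (Fin 5)) * g2 ≠ 1 := by
    constructor
    · have h1 : g3 ^ 3 = 1 := by rw [← hord]; exact pow_orderOf_eq_one g3
      rw [hg3, inv_pow, inv_eq_one] at h1
      have := congrArg (Subtype.val) h1
      push_cast at this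
      exact this
    · intro h
      have : g1 * g2 = 1 := Subtype.ext (by push_cast; exact h)
      rw [this, inv_one] at hg3
      rw [hg3, orderOf_one] at hord
      omega
  obtain ⟨h, hhmem, hh1, hh2⟩ := dcore _ hmem1 _ hmem2 hcube
  set H := lift h hhmem with hH
  have e1 : H * s * H⁻¹ = g1 := by
    apply Subtype.ext
    push_cast [hH, lift, sval]
    exact hh1
  have e2 : H * b2 * H⁻¹ = g2 := by
    apply Subtype.ext
    push_cast [hH, lift, b2]
    exact hh2
  refine ⟨H, e1, e2, ?_⟩
  rw [hg3, ← e1, ← e2, b3]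
  group

/-- The base triple lies in `T`. -/
lemma base_mem : (s, b2, b3) ∈ T := by
  refine ⟨by rw [b3]; group, IsConj.refl s, ?_, orderOf_b3, ?_⟩
  · refine isConj_iff.mpr ⟨lift (wrd [(2,3),(3,4)]) dbcmem, ?_⟩
    apply Subtype.ext
    push_cast [lift, sval, b2]
    exact dbase1
  · refine genTop _ s b3 ?_ ?_ orderOf_s orderOf_b3
    · exact Subgroup.subset_closure (by simp)
    · exact Subgroup.subset_closure (by simp)

/-- The inner Nielsen class `ni(A₅, (C₅⁺, C₅⁻, C₃))` has exactly one element: the set of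
such triples is nonempty and `A₅` acts transitively on it by simultaneous conjugation. -/
theorem nielsen_class_C5p_C5m_C3_singleton :
    T.Nonempty ∧ ∀ p ∈ T, ∀ q ∈ T, ∃ h : A5,
      h * p.1 * h⁻¹ = q.1 ∧ h * p.2.1 * h⁻¹ = q.2.1 ∧ h * p.2.2 * h⁻¹ = q.2.2 := by
  refine ⟨⟨(s, b2, b3), base_mem⟩, ?_⟩
  intro p hp q hq
  obtain ⟨a, ha1, ha2, ha3⟩ := reach p hp
  obtain ⟨b, hb1, hb2, hb3⟩ := reach q hq
  refine ⟨b * a⁻¹, ?_, ?_, ?_⟩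
  · rw [← ha1, ← hb1]; group
  · rw [← ha2, ← hb2]; group
  · rw [← ha3, ← hb3]; group

end Stmt13
end

section
/- Let σ be the 5-cycle (0 1 2 3 4) in the alternating group A₅ on {0,1,2,3,4}, and let C₅⁺ be the conjugacy class of σ in A₅. Let T be the set of triples (g₁, g₂, g₃) ∈ A₅³ such that g₁g₂g₃ = 1, each gᵢ ∈ C₅⁺, and g₁, g₂, g₃ generate A₅. Then T is nonempty and A₅ acts transitively on T by simultaneous conjugation. (Equivalently, the inner Nielsen class ni(A₅, (C₅⁺, C₅⁺, C₅⁺)) has exactly one element.) -/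
namespace Stmt14

/-- `A₅`, the alternating group on `{0, 1, 2, 3, 4}`. -/
abbrev A5 : Type := ↥(alternatingGroup (Fin 5))

/-- The 5-cycle `σ = (0 1 2 3 4)`. -/
def σ : Equiv.Perm (Fin 5) := finRotate 5

lemma σ_mem : σ ∈ alternatingGroup (Fin 5) := by
  rw [Equiv.Perm.mem_alternatingGroup]
  show Equiv.Perm.sign (finRotate (4 + 1)) = 1
  rw [sign_finRotate]; decide

/-- `σ` as an element of `A₅`. -/
def s : A5 := ⟨σ, σ_mem⟩

/-- The set of triples `(g₁, g₂, g₃)` with `g₁g₂g₃ = 1`, all entries in `C₅⁺` (the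
`A₅`-conjugacy class of `σ`), generating `A₅`. -/
def T : Set (A5 × A5 × A5) :=
  {p | p.1 * p.2.1 * p.2.2 = 1 ∧ IsConj s p.1 ∧ IsConj s p.2.1 ∧ IsConj s p.2.2 ∧
    Subgroup.closure {p.1, p.2.1, p.2.2} = ⊤}

instance decAlt : DecidablePred (· ∈ alternatingGroup (Fin 5)) := fun p =>
  decidable_of_iff _ (Equiv.Perm.mem_alternatingGroup (f := p)).symm

def t : A5 := ⟨c[0, 3, 1, 2, 4], by decide⟩

set_option maxRecDepth 10000 in
lemma commFact : ∀ g₁ g₂ : A5, g₁*g₁*g₁*g₁*g₁ = 1 → g₁ ≠ 1 → g₁*g₂ = g₂*g₁ →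
    (g₂ = 1 ∨ g₂ = g₁ ∨ g₂ = g₁*g₁ ∨ g₂ = g₁*g₁*g₁ ∨ g₂ = g₁*g₁*g₁*g₁) := by decide

set_option maxRecDepth 10000 in
lemma coreFact : ∀ a : A5, (∃ c : A5, c*s*c⁻¹ = a) → (∃ c : A5, c*s*c⁻¹ = (s*a)⁻¹) →
    s*a ≠ a*s → ∃ h : A5, h*s*h⁻¹ = s ∧ h*a*h⁻¹ = t := by decide

set_option maxRecDepth 100000 in
set_option synthInstance.maxSize 4000 in
set_option synthInstance.maxHeartbeats 1000000 in
set_option maxHeartbeats 2000000 in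
lemma closure_top : Subgroup.closure ({s, t, (s*t)⁻¹} : Set A5) = ⊤ := by
  set H := Subgroup.closure ({s, t, (s*t)⁻¹} : Set A5) with hH
  have hsH : s ∈ H := Subgroup.subset_closure (by simp)
  have htH : t ∈ H := Subgroup.subset_closure (by simp)
  have m0 : (1:A5) ∈ H := one_mem H
  have m3 : (s*s : A5) ∈ H := mul_mem hsH hsH
  have m4 : (s*t : A5) ∈ H := mul_mem hsH htH
  have m5 : (t*s : A5) ∈ H := mul_mem htH hsH
  have m6 : (t*t : A5) ∈ H := mul_mem htH htH
  have m7 : (s*s*s : A5) ∈ H := mul_mem m3 hsH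
  have m8 : (s*s*t : A5) ∈ H := mul_mem m3 htH
  have m9 : (s*t*s : A5) ∈ H := mul_mem m4 hsH
  have m10 : (s*t*t : A5) ∈ H := mul_mem m4 htH
  have m11 : (t*s*s : A5) ∈ H := mul_mem m5 hsH
  have m12 : (t*s*t : A5) ∈ H := mul_mem m5 htH
  have m13 : (t*t*s : A5) ∈ H := mul_mem m6 hsH
  have m14 : (t*t*t : A5) ∈ H := mul_mem m6 htH
  have m15 : (s*s*s*s : A5) ∈ H := mul_mem m7 hsH
  have m16 : (s*s*s*t : A5) ∈ H := mul_mem m7 htH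
  have m17 : (s*s*t*s : A5) ∈ H := mul_mem m8 hsH
  have m18 : (s*s*t*t : A5) ∈ H := mul_mem m8 htH
  have m19 : (s*t*s*s : A5) ∈ H := mul_mem m9 hsH
  have m20 : (s*t*s*t : A5) ∈ H := mul_mem m9 htH
  have m21 : (s*t*t*t : A5) ∈ H := mul_mem m10 htH
  have m22 : (t*s*s*s : A5) ∈ H := mul_mem m11 hsH
  have m23 : (t*s*t*s : A5) ∈ H := mul_mem m12 hsH
  have m24 : (t*s*t*t : A5) ∈ H := mul_mem m12 htH
  have m25 : (t*t*s*s : A5) ∈ H := mul_mem m13 hsH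
  have m26 : (t*t*s*t : A5) ∈ H := mul_mem m13 htH
  have m27 : (t*t*t*s : A5) ∈ H := mul_mem m14 hsH
  have m28 : (t*t*t*t : A5) ∈ H := mul_mem m14 htH
  have m29 : (s*s*s*s*t : A5) ∈ H := mul_mem m15 htH
  have m30 : (s*s*s*t*s : A5) ∈ H := mul_mem m16 hsH
  have m31 : (s*s*s*t*t : A5) ∈ H := mul_mem m16 htH
  have m32 : (s*s*t*s*s : A5) ∈ H := mul_mem m17 hsH
  have m33 : (s*s*t*s*t : A5) ∈ H := mul_mem m17 htH
  have m34 : (s*s*t*t*t : A5) ∈ H := mul_mem m18 htH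
  have m35 : (s*t*s*s*s : A5) ∈ H := mul_mem m19 hsH
  have m36 : (s*t*s*t*s : A5) ∈ H := mul_mem m20 hsH
  have m37 : (s*t*s*t*t : A5) ∈ H := mul_mem m20 htH
  have m38 : (s*t*t*t*t : A5) ∈ H := mul_mem m21 htH
  have m39 : (t*s*s*s*s : A5) ∈ H := mul_mem m22 hsH
  have m40 : (t*s*t*s*s : A5) ∈ H := mul_mem m23 hsH
  have m41 : (t*s*t*t*t : A5) ∈ H := mul_mem m24 htH
  have m42 : (t*t*s*s*s : A5) ∈ H := mul_mem m25 hsH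
  have m43 : (t*t*s*t*s : A5) ∈ H := mul_mem m26 hsH
  have m44 : (t*t*s*t*t : A5) ∈ H := mul_mem m26 htH
  have m45 : (t*t*t*s*s : A5) ∈ H := mul_mem m27 hsH
  have m46 : (t*t*t*s*t : A5) ∈ H := mul_mem m27 htH
  have m47 : (t*t*t*t*s : A5) ∈ H := mul_mem m28 hsH
  have m48 : (s*s*s*s*t*s : A5) ∈ H := mul_mem m29 hsH
  have m49 : (s*s*s*t*s*s : A5) ∈ H := mul_mem m30 hsH
  have m50 : (s*s*s*t*t*t : A5) ∈ H := mul_mem m31 htH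
  have m51 : (s*s*t*s*s*s : A5) ∈ H := mul_mem m32 hsH
  have m52 : (s*s*t*s*t*s : A5) ∈ H := mul_mem m33 hsH
  have m53 : (s*s*t*s*t*t : A5) ∈ H := mul_mem m33 htH
  have m54 : (s*t*s*s*s*s : A5) ∈ H := mul_mem m35 hsH
  have m55 : (s*t*s*t*s*s : A5) ∈ H := mul_mem m36 hsH
  have m56 : (s*t*t*t*t*s : A5) ∈ H := mul_mem m38 hsH
  have m57 : (t*s*t*t*t*t : A5) ∈ H := mul_mem m41 htH
  have m58 : (t*t*t*s*s*s : A5) ∈ H := mul_mem m45 hsH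
  have m59 : (t*t*t*t*s*t : A5) ∈ H := mul_mem m47 htH
  have hF : ∀ x : A5, x = 1 ∨ x = s ∨ x = t ∨ x = s*s ∨ x = s*t ∨ x = t*s ∨ x = t*t ∨ x = s*s*s ∨ x = s*s*t ∨ x = s*t*s ∨ x = s*t*t ∨ x = t*s*s ∨ x = t*s*t ∨ x = t*t*s ∨ x = t*t*t ∨ x = s*s*s*s ∨ x = s*s*s*t ∨ x = s*s*t*s ∨ x = s*s*t*t ∨ x = s*t*s*s ∨ x = s*t*s*t ∨ x = s*t*t*t ∨ x = t*s*s*s ∨ x = t*s*t*s ∨ x = t*s*t*t ∨ x = t*t*s*s ∨ x = t*t*s*t ∨ x = t*t*t*s ∨ x = t*t*t*t ∨ x = s*s*s*s*t ∨ x = s*s*s*t*s ∨ x = s*s*s*t*t ∨ x = s*s*t*s*s ∨ x = s*s*t*s*t ∨ x = s*s*t*t*t ∨ x = s*t*s*s*s ∨ x = s*t*s*t*s ∨ x = s*t*s*t*t ∨ x = s*t*t*t*t ∨ x = t*s*s*s*s ∨ x = t*s*t*s*s ∨ x = t*s*t*t*t ∨ x = t*t*s*s*s ∨ x = t*t*s*t*s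 ∨ x = t*t*s*t*t ∨ x = t*t*t*s*s ∨ x = t*t*t*s*t ∨ x = t*t*t*t*s ∨ x = s*s*s*s*t*s ∨ x = s*s*s*t*s*s ∨ x = s*s*s*t*t*t ∨ x = s*s*t*s*s*s ∨ x = s*s*t*s*t*s ∨ x = s*s*t*s*t*t ∨ x = s*t*s*s*s*s ∨ x = s*t*s*t*s*s ∨ x = s*t*t*t*t*s ∨ x = t*s*t*t*t*t ∨ x = t*t*t*s*s*s ∨ x = t*t*t*t*s*t := by decide
  rw [eq_top_iff]
  intro x _
  rcases hF x with rfl|rfl|rfl|rfl|rfl|rfl|rfl|rfl|rfl|rfl|rfl|rfl|rfl|rfl|rfl|rfl|rfl|rfl|rfl|rfl|rfl|rfl|rfl|rfl|rfl|rfl|rfl|rfl|rfl|rfl|rfl|rfl|rfl|rfl|rfl|rfl|rfl|rfl|rfl|rfl|rfl|rfl|rfl|rfl|rfl|rfl|rfl|rfl|rfl|rfl|rfl|rfl|rfl|rfl|rfl|rfl|rfl|rfl|rfl|rfl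
  exacts [m0, hsH, htH, m3, m4, m5, m6, m7, m8, m9, m10, m11, m12, m13, m14, m15, m16, m17, m18, m19, m20, m21, m22, m23, m24, m25, m26, m27, m28, m29, m30, m31, m32, m33, m34, m35, m36, m37, m38, m39, m40, m41, m42, m43, m44, m45, m46, m47, m48, m49, m50, m51, m52, m53, m54, m55, m56, m57, m58, m59]

lemma to_base : ∀ p ∈ T, ∃ h : A5,
    h * p.1 * h⁻¹ = s ∧ h * p.2.1 * h⁻¹ = t ∧ h * p.2.2 * h⁻¹ = (s*t)⁻¹ := by
  rintro ⟨g₁, g₂, g₃⟩ ⟨hprod, h1, h2, h3, hcl⟩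
  dsimp only at hprod h1 h2 h3 hcl ⊢
  obtain ⟨c, hc⟩ := isConj_iff.mp h1
  have hg3 : g₃ = (g₁ * g₂)⁻¹ := eq_inv_of_mul_eq_one_right hprod
  have hnc : s * (c⁻¹ * g₂ * c) ≠ (c⁻¹ * g₂ * c) * s := by
    intro hcomm
    have e1 : g₁ * g₂ = c * (s * (c⁻¹ * g₂ * c)) * c⁻¹ := by rw [← hc]; group
    have e2 : g₂ * g₁ = c * ((c⁻¹ * g₂ * c) * s) * c⁻¹ := by rw [← hc]; group
    have hcomm' : g₁ * g₂ = g₂ * g₁ := by rw [e1, e2, hcomm]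
    have hs5 : s * s * s * s * s = (1 : A5) := by decide
    have h5 : g₁*g₁*g₁*g₁*g₁ = 1 := by
      have e : g₁*g₁*g₁*g₁*g₁ = c * (s*s*s*s*s) * c⁻¹ := by rw [← hc]; group
      rw [e, hs5, mul_one, mul_inv_cancel]
    have hne : g₁ ≠ 1 := by
      intro h
      have e : s = c⁻¹ * g₁ * c := by rw [← hc]; group
      rw [h, mul_one, inv_mul_cancel] at e
      exact (by decide : s ≠ (1:A5)) e
    have hg2z : g₂ ∈ Subgroup.zpowers g₁ := by
      rcases commFact g₁ g₂ h5 hne hcomm' with h|h|h|h|h <;> rw [h]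
      · exact one_mem _
      · exact Subgroup.mem_zpowers g₁
      · exact mul_mem (Subgroup.mem_zpowers g₁) (Subgroup.mem_zpowers g₁)
      · exact mul_mem (mul_mem (Subgroup.mem_zpowers g₁) (Subgroup.mem_zpowers g₁))
          (Subgroup.mem_zpowers g₁)
      · exact mul_mem (mul_mem (mul_mem (Subgroup.mem_zpowers g₁) (Subgroup.mem_zpowers g₁))
          (Subgroup.mem_zpowers g₁)) (Subgroup.mem_zpowers g₁)
    have hsub : ({g₁, g₂, g₃} : Set A5) ⊆ Subgroup.zpowers g₁ := by
      intro x hx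
      simp only [Set.mem_insert_iff, Set.mem_singleton_iff] at hx
      rcases hx with rfl|rfl|rfl
      · exact Subgroup.mem_zpowers x
      · exact hg2z
      · rw [hg3]; exact inv_mem (mul_mem (Subgroup.mem_zpowers g₁) hg2z)
    have hle : Subgroup.closure {g₁, g₂, g₃} ≤ Subgroup.zpowers g₁ :=
      (Subgroup.closure_le _).mpr hsub
    rw [hcl] at hle
    obtain ⟨k, hk⟩ := hle (Subgroup.mem_top s)
    obtain ⟨m, hm⟩ := hle (Subgroup.mem_top t)
    have hcst : s * t = t * s := by rw [← hk, ← hm]; exact ((Commute.refl g₁).zpow_zpow k m)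
    exact (by decide : s * t ≠ t * s) hcst
  have ha2 : ∃ d : A5, d*s*d⁻¹ = c⁻¹ * g₂ * c := by
    obtain ⟨d₂, hd₂⟩ := isConj_iff.mp h2
    exact ⟨c⁻¹ * d₂, by rw [← hd₂]; group⟩
  have ha3 : ∃ d : A5, d*s*d⁻¹ = (s * (c⁻¹ * g₂ * c))⁻¹ := by
    obtain ⟨d₃, hd₃⟩ := isConj_iff.mp h3
    refine ⟨c⁻¹ * d₃, ?_⟩
    have e : (s * (c⁻¹ * g₂ * c))⁻¹ = c⁻¹ * g₃ * c := by rw [hg3, ← hc]; group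
    rw [e, ← hd₃]; group
  obtain ⟨h₀, hh1, hh2⟩ := coreFact _ ha2 ha3 hnc
  refine ⟨h₀ * c⁻¹, ?_, ?_, ?_⟩
  · have e : (h₀*c⁻¹) * g₁ * (h₀*c⁻¹)⁻¹ = h₀ * s * h₀⁻¹ := by rw [← hc]; group
    rw [e, hh1]
  · have e : (h₀*c⁻¹) * g₂ * (h₀*c⁻¹)⁻¹ = h₀ * (c⁻¹ * g₂ * c) * h₀⁻¹ := by group
    rw [e, hh2]
  · have e : (h₀*c⁻¹) * g₃ * (h₀*c⁻¹)⁻¹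
        = ((h₀ * s * h₀⁻¹) * (h₀ * (c⁻¹ * g₂ * c) * h₀⁻¹))⁻¹ := by
      rw [hg3, ← hc]; group
    rw [e, hh1, hh2]

/-- The inner Nielsen class `ni(A₅, (C₅⁺, C₅⁺, C₅⁺))` has exactly one element: the set of
such triples is nonempty and `A₅` acts transitively on it by simultaneous conjugation. -/
theorem nielsen_class_C5p_cubed_singleton :
    T.Nonempty ∧ ∀ p ∈ T, ∀ q ∈ T, ∃ h : A5,
      h * p.1 * h⁻¹ = q.1 ∧ h * p.2.1 * h⁻¹ = q.2.1 ∧ h * p.2.2 * h⁻¹ = q.2.2 := by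
  constructor
  · refine ⟨(s, t, (s*t)⁻¹), ?_, ?_, ?_, ?_, ?_⟩
    · exact mul_inv_cancel (s * t)
    · exact isConj_iff.mpr ⟨1, by group⟩
    · exact isConj_iff.mpr (by decide)
    · exact isConj_iff.mpr (by decide)
    · exact closure_top
  · intro p hp q hq
    obtain ⟨h, ha, hb, hc'⟩ := to_base p hp
    obtain ⟨h', ha', hb', hc''⟩ := to_base q hq
    refine ⟨h'⁻¹ * h, ?_, ?_, ?_⟩
    · have e : (h'⁻¹*h) * p.1 * (h'⁻¹*h)⁻¹ = h'⁻¹ * (h * p.1 * h⁻¹) * h' := by group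
      rw [e, ha, ← ha']; group
    · have e : (h'⁻¹*h) * p.2.1 * (h'⁻¹*h)⁻¹ = h'⁻¹ * (h * p.2.1 * h⁻¹) * h' := by group
      rw [e, hb, ← hb']; group
    · have e : (h'⁻¹*h) * p.2.2 * (h'⁻¹*h)⁻¹ = h'⁻¹ * (h * p.2.2 * h⁻¹) * h' := by group
      rw [e, hc', ← hc'']; group

end Stmt14
end
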